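/- arXiv:math/0404072 — 6 statements merged into one kernel-verified Lean document; each statement's English description precedes it below -/
import Mathlib

section
/- Let x be a nilpotent endomorphism of an n-dimensional complex vector space V with Jordan type d, and let (p_1,…,p_s) be a sequence of positive integers with ord(p_1,…,p_s) = d. Then there exists a flag F of type (p_1,…,p_s) in V such that x F_i ⊆ F_{i−1} for all 1 ≤ i ≤ s (where F_0 = 0). (Existence part of Theorem 2.6.) -/
open Module

/-- `d` is a partition of `n`, encoded as a weakly decreasing function on indices `≥ 1`
(with zero padding beyond the parts, in particular beyond index `n`) whose entries sum
to `n`. -/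
def IsPartitionFun (n : ℕ) (d : ℕ → ℕ) : Prop :=
  (∀ i j, 1 ≤ i → i ≤ j → d j ≤ d i) ∧ (∀ j, n < j → d j = 0) ∧
    ∑ j ∈ Finset.Icc 1 n, d j = n

/-- The `i`-th entry of `ord(p_1,…,p_s)`, namely `#{j ∈ [1,s] : p_j ≥ i}`. -/
def ordEntry (s : ℕ) (p : ℕ → ℕ) (i : ℕ) : ℕ :=
  ((Finset.Icc 1 s).filter fun j => i ≤ p j).card

/-- A nilpotent endomorphism `x` of an `n`-dimensional space has Jordan type `d` if
`#{j : d_j ≥ i} = dim ker(x^i) − dim ker(x^{i−1})` for every `i ≥ 1`. -/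
def HasJordanType {V : Type*} [AddCommGroup V] [Module ℂ V]
    (n : ℕ) (x : Module.End ℂ V) (d : ℕ → ℕ) : Prop :=
  IsPartitionFun n d ∧ ∀ i, 1 ≤ i →
    finrank ℂ (LinearMap.ker (x ^ i)) =
      finrank ℂ (LinearMap.ker (x ^ (i - 1))) + ordEntry n d i

/-- A flag of type `(p_1,…,p_s)`: a chain `0 = F_0 ⊆ F_1 ⊆ … ⊆ F_s = V` with
`dim(F_i/F_{i−1}) = p_i` for `1 ≤ i ≤ s`. -/
def IsFlagOfType {V : Type*} [AddCommGroup V] [Module ℂ V]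
    (s : ℕ) (p : ℕ → ℕ) (F : ℕ → Submodule ℂ V) : Prop :=
  F 0 = ⊥ ∧ F s = ⊤ ∧ (∀ i, 1 ≤ i → i ≤ s → F (i - 1) ≤ F i) ∧
    ∀ i, 1 ≤ i → i ≤ s → finrank ℂ (F i) = finrank ℂ (F (i - 1)) + p i

namespace FlagExistenceAux

universe u

variable {V : Type u} [AddCommGroup V] [Module ℂ V] [FiniteDimensional ℂ V]

lemma finrank_map_domRestrict {W : Type u} [AddCommGroup W] [Module ℂ W] (f : V →ₗ[ℂ] W)
    (C : Submodule ℂ V) :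
    finrank ℂ (C.map f) + finrank ℂ ((LinearMap.ker f).comap C.subtype) = finrank ℂ C := by
  have h := LinearMap.finrank_range_add_finrank_ker (f.domRestrict C)
  rwa [LinearMap.range_domRestrict, LinearMap.ker_domRestrict] at h

lemma finrank_map_mkQ (P C : Submodule ℂ V) (h : P ≤ C) :
    finrank ℂ (C.map P.mkQ) + finrank ℂ P = finrank ℂ C := by
  have h1 := finrank_map_domRestrict P.mkQ C
  rwa [Submodule.ker_mkQ, (Submodule.comapSubtypeEquivOfLe h).finrank_eq] at h1

lemma finrank_comap_eq (f : V →ₗ[ℂ] V) (P : Submodule ℂ V) :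
    finrank ℂ (P.comap f) =
      finrank ℂ (LinearMap.ker f) + finrank ℂ (P ⊓ LinearMap.range f : Submodule ℂ V) := by
  have h1 := finrank_map_domRestrict f (P.comap f)
  have h2 : (P.comap f).map f = P ⊓ LinearMap.range f := by
    rw [Submodule.map_comap_eq, inf_comm]
  have h3 : LinearMap.ker f ≤ P.comap f := by
    intro v hv
    have hv0 : f v = 0 := LinearMap.mem_ker.mp hv
    rw [Submodule.mem_comap, hv0]
    exact P.zero_mem
  rw [h2, (Submodule.comapSubtypeEquivOfLe h3).finrank_eq] at h1
  omega

lemma finrank_ker_inf_range (x : Module.End ℂ V) (j : ℕ) :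
    finrank ℂ (LinearMap.ker x ⊓ LinearMap.range (x ^ j) : Submodule ℂ V)
      + finrank ℂ (LinearMap.ker (x ^ j)) = finrank ℂ (LinearMap.ker (x ^ (j + 1))) := by
  have h1 := finrank_map_domRestrict (x ^ j : V →ₗ[ℂ] V) (LinearMap.ker (x ^ (j + 1)))
  have happ : ∀ v : V, (x ^ (j + 1)) v = x ((x ^ j) v) := by
    intro v
    rw [pow_succ']
    rfl
  have hmap : (LinearMap.ker (x ^ (j + 1))).map (x ^ j : V →ₗ[ℂ] V)
      = LinearMap.ker x ⊓ LinearMap.range (x ^ j) := by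
    apply le_antisymm
    · rintro z hz
      rw [Submodule.mem_map] at hz
      obtain ⟨v, hv, rfl⟩ := hz
      rw [Submodule.mem_inf]
      constructor
      · rw [LinearMap.mem_ker, ← happ v]
        exact LinearMap.mem_ker.mp hv
      · exact ⟨v, rfl⟩
    · rintro z hz
      rw [Submodule.mem_inf] at hz
      obtain ⟨hz1, v, rfl⟩ := hz
      refine Submodule.mem_map.mpr ⟨v, ?_, rfl⟩
      rw [LinearMap.mem_ker, happ v]
      exact LinearMap.mem_ker.mp hz1
  have hker : LinearMap.ker (x ^ j) ≤ LinearMap.ker (x ^ (j + 1)) := by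
    intro v hv
    rw [LinearMap.mem_ker, happ v, LinearMap.mem_ker.mp hv, map_zero]
  rw [hmap, (Submodule.comapSubtypeEquivOfLe hker).finrank_eq] at h1
  exact h1

lemma exists_intermediate_dim (k : ℕ) : ∀ (A B : Submodule ℂ V), A ≤ B →
    finrank ℂ A + k ≤ finrank ℂ B →
    ∃ W, A ≤ W ∧ W ≤ B ∧ finrank ℂ W = finrank ℂ A + k := by
  induction k with
  | zero => exact fun A B h _ => ⟨A, le_refl A, h, by omega⟩
  | succ k ih =>
    intro A B hAB hk
    obtain ⟨W, hAW, hWB, hW⟩ := ih A B hAB (by omega)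
    have hex : ∃ v ∈ B, v ∉ W := by
      by_contra h
      push_neg at h
      have hle : B ≤ W := h
      have := Submodule.finrank_mono hle
      omega
    obtain ⟨v, hvB, hvW⟩ := hex
    have hv0 : v ≠ 0 := fun h => hvW (h ▸ W.zero_mem)
    refine ⟨W ⊔ ℂ ∙ v, le_trans hAW le_sup_left,
      sup_le hWB ((Submodule.span_singleton_le_iff_mem v B).mpr hvB), ?_⟩
    have hinf : W ⊓ (ℂ ∙ v) = ⊥ := by
      rw [eq_bot_iff]
      intro z hz
      rw [Submodule.mem_inf] at hz
      obtain ⟨hzW, hzv⟩ := hz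
      obtain ⟨c, rfl⟩ := Submodule.mem_span_singleton.mp hzv
      rcases eq_or_ne c 0 with rfl | hc
      · simp
      · exfalso
        apply hvW
        have h := W.smul_mem c⁻¹ hzW
        rwa [smul_smul, inv_mul_cancel₀ hc, one_smul] at h
    have h := Submodule.finrank_sup_add_finrank_inf_eq W (ℂ ∙ v)
    rw [hinf, finrank_bot, finrank_span_singleton hv0] at h
    omega

lemma ker_mapQ (P : Submodule ℂ V) (f : V →ₗ[ℂ] V) (h : P ≤ P.comap f) :
    LinearMap.ker (P.mapQ P f h) = (P.comap f).map P.mkQ := by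
  unfold Submodule.mapQ
  rw [Submodule.ker_liftQ, LinearMap.ker_comp, Submodule.ker_mkQ]

lemma sum_Icc_shift (s : ℕ) (f : ℕ → ℕ) :
    ∑ j ∈ Finset.Icc 1 (s + 1), f j = f 1 + ∑ j ∈ Finset.Icc 1 s, f (j + 1) := by
  induction s with
  | zero => simp
  | succ s ih =>
    rw [Finset.sum_Icc_succ_top (by omega), ih,
      Finset.sum_Icc_succ_top (show 1 ≤ s + 1 by omega)]
    ring

lemma card_filter_le_Icc (N m : ℕ) (h : m ≤ N) :
    ((Finset.Icc 1 N).filter fun i => i ≤ m).card = m := by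
  have he : ((Finset.Icc 1 N).filter fun i => i ≤ m) = Finset.Icc 1 m := by
    ext i
    simp only [Finset.mem_filter, Finset.mem_Icc]
    omega
  rw [he, Nat.card_Icc]
  omega

end FlagExistenceAux

open FlagExistenceAux in
lemma flag_exists_aux : ∀ (s : ℕ) (V : Type u) [AddCommGroup V] [Module ℂ V]
    [FiniteDimensional ℂ V] (n : ℕ), finrank ℂ V = n →
    ∀ (x : Module.End ℂ V) (d : ℕ → ℕ), HasJordanType n x d →
    ∀ (p : ℕ → ℕ), (∀ j, 1 ≤ j → j ≤ s → 1 ≤ p j) →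
    (∀ i, 1 ≤ i → ordEntry s p i = d i) →
    ∃ F : ℕ → Submodule ℂ V, IsFlagOfType s p F ∧
      ∀ i, 1 ≤ i → i ≤ s → (F i).map (x : V →ₗ[ℂ] V) ≤ F (i - 1) := by
  intro s
  induction s with
  | zero =>
    intro V _ _ _ n hV x d hd p hp hord
    have hd0 : ∀ i, 1 ≤ i → d i = 0 := by
      intro i hi
      rw [← hord i hi]
      simp [ordEntry]
    have hn : n = 0 := by
      have hs := hd.1.2.2
      rw [Finset.sum_eq_zero (fun i hi => hd0 i (Finset.mem_Icc.mp hi).1)] at hs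
      omega
    have hbt : (⊥ : Submodule ℂ V) = ⊤ := by
      apply Submodule.eq_top_of_finrank_eq
      rw [finrank_bot, hV, hn]
    exact ⟨fun _ => ⊥, ⟨rfl, hbt, fun i h1 h2 => by omega, fun i h1 h2 => by omega⟩,
      fun i h1 h2 => by omega⟩
  | succ s ih =>
    intro V _ _ _ n hV x d hd p hp hord
    obtain ⟨⟨hanti, hdzero, hsum⟩, hker⟩ := hd
    obtain ⟨m, hm⟩ : ∃ m, m = p 1 := ⟨p 1, rfl⟩
    have hm1 : 1 ≤ m := by rw [hm]; exact hp 1 (le_refl 1) (by omega)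
    have hpn : ∀ j, 1 ≤ j → j ≤ s + 1 → p j ≤ n := by
      intro j h1 h2
      by_contra hc
      have h0 : ordEntry (s + 1) p (n + 1) = 0 := by
        rw [hord _ (by omega)]
        exact hdzero _ (by omega)
      unfold ordEntry at h0
      rw [Finset.card_eq_zero] at h0
      have hmem : j ∈ (Finset.Icc 1 (s + 1)).filter fun j => n + 1 ≤ p j :=
        Finset.mem_filter.mpr ⟨Finset.mem_Icc.mpr ⟨h1, h2⟩, by omega⟩
      rw [h0] at hmem
      exact absurd hmem (Finset.notMem_empty j)
    have hmn : m ≤ n := by rw [hm]; exact hpn 1 (le_refl 1) (by omega)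
    obtain ⟨a, ha⟩ : ∃ a, a = d m := ⟨d m, rfl⟩
    have corner : d (m + 1) < a := by
      rw [ha, ← hord m hm1, ← hord (m + 1) (by omega)]
      apply Finset.card_lt_card
      rw [Finset.ssubset_iff_of_subset
        (Finset.monotone_filter_right _ (fun j _ (hj : m + 1 ≤ p j) => by omega))]
      refine ⟨1, Finset.mem_filter.mpr ⟨Finset.mem_Icc.mpr ⟨le_refl 1, by omega⟩, by omega⟩, ?_⟩
      intro hmem
      have := (Finset.mem_filter.mp hmem).2
      omega
    have ha1 : 1 ≤ a := by
      rw [ha, ← hord m hm1]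
      apply Finset.card_pos.mpr
      exact ⟨1, Finset.mem_filter.mpr ⟨Finset.mem_Icc.mpr ⟨le_refl 1, by omega⟩, by omega⟩⟩
    have hca : ordEntry n d a = m := by
      unfold ordEntry
      have he : (Finset.Icc 1 n).filter (fun j => a ≤ d j) = Finset.Icc 1 m := by
        ext j
        simp only [Finset.mem_filter, Finset.mem_Icc]
        constructor
        · rintro ⟨⟨h1, h2⟩, h3⟩
          refine ⟨h1, ?_⟩
          by_contra hcon
          have hj : d j ≤ d (m + 1) := hanti (m + 1) j (by omega) (by omega)
          omega
        · rintro ⟨h1, h2⟩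
          refine ⟨⟨h1, by omega⟩, ?_⟩
          rw [ha]
          exact hanti j m h1 h2
      rw [he, Nat.card_Icc]
      omega
    have hca1 : ordEntry n d (a + 1) < m := by
      unfold ordEntry
      have hsub : (Finset.Icc 1 n).filter (fun j => a + 1 ≤ d j) ⊆ Finset.Icc 1 (m - 1) := by
        intro j hj
        simp only [Finset.mem_filter, Finset.mem_Icc] at hj ⊢
        refine ⟨hj.1.1, ?_⟩
        by_contra hcon
        have h1 : d j ≤ d m := hanti m j hm1 (by omega)
        rw [← ha] at h1
        omega
      have := Finset.card_le_card hsub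
      rw [Nat.card_Icc] at this
      omega
    -- kernel dimension facts
    have hK0 : finrank ℂ (LinearMap.ker (x ^ 0)) = 0 := by
      rw [pow_zero, Module.End.one_eq_id, LinearMap.ker_id, finrank_bot]
    have hinfdim : ∀ j, finrank ℂ (LinearMap.ker x ⊓ LinearMap.range (x ^ j) : Submodule ℂ V)
        = ordEntry n d (j + 1) := by
      intro j
      have h1 := finrank_ker_inf_range x j
      have h2 := hker (j + 1) (by omega)
      rw [show j + 1 - 1 = j from rfl] at h2
      omega
    have hrange : ∀ i j : ℕ, i ≤ j → LinearMap.range (x ^ j) ≤ LinearMap.range (x ^ i) := by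
      intro i j hij
      have hx : x ^ j = (x ^ i) * (x ^ (j - i)) := by
        rw [← pow_add]
        congr 1
        omega
      rw [hx]
      rintro _ ⟨v, rfl⟩
      exact ⟨(x ^ (j - i)) v, rfl⟩
    -- choose the subspace P
    have hAB : (LinearMap.ker x ⊓ LinearMap.range (x ^ a) : Submodule ℂ V)
        ≤ LinearMap.ker x ⊓ LinearMap.range (x ^ (a - 1)) :=
      inf_le_inf_left _ (hrange _ _ (by omega))
    have hdimA : finrank ℂ (LinearMap.ker x ⊓ LinearMap.range (x ^ a) : Submodule ℂ V)
        = ordEntry n d (a + 1) := hinfdim a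
    have hdimB : finrank ℂ (LinearMap.ker x ⊓ LinearMap.range (x ^ (a - 1)) : Submodule ℂ V)
        = m := by
      have h1 := hinfdim (a - 1)
      rw [show a - 1 + 1 = a from by omega] at h1
      rw [h1, hca]
    obtain ⟨P, hAP, hPB, hPrank0⟩ := exists_intermediate_dim
      (m - finrank ℂ (LinearMap.ker x ⊓ LinearMap.range (x ^ a) : Submodule ℂ V))
      (LinearMap.ker x ⊓ LinearMap.range (x ^ a))
      (LinearMap.ker x ⊓ LinearMap.range (x ^ (a - 1))) hAB (by omega)
    have hPrank : finrank ℂ P = m := by omega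
    have hPker : P ≤ LinearMap.ker x := le_trans hPB inf_le_left
    have hPrange : P ≤ LinearMap.range (x ^ (a - 1)) := le_trans hPB inf_le_right
    have hcom : P ≤ P.comap x := by
      intro v hv
      have hv0 : x v = 0 := LinearMap.mem_ker.mp (hPker hv)
      rw [Submodule.mem_comap]
      show x v ∈ P
      rw [hv0]
      exact P.zero_mem
    obtain ⟨xq, hxq⟩ : ∃ xq : Module.End ℂ (V ⧸ P), xq = Submodule.mapQ P P x hcom :=
      ⟨_, rfl⟩
    have hVq : finrank ℂ (V ⧸ P) = n - m := by
      have := Submodule.finrank_quotient_add_finrank P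
      omega
    obtain ⟨p', hp'def⟩ : ∃ p' : ℕ → ℕ, p' = fun j => p (j + 1) := ⟨_, rfl⟩
    obtain ⟨d', hd'def⟩ : ∃ d' : ℕ → ℕ, d' = fun i => ordEntry s p' i := ⟨_, rfl⟩
    have hC1 : ∀ i, 1 ≤ i → d i = d' i + (if i ≤ m then 1 else 0) := by
      intro i hi
      rw [← hord i hi]
      simp only [hd'def, hp'def]
      unfold ordEntry
      rw [Finset.card_filter, Finset.card_filter, sum_Icc_shift, hm]
      exact add_comm _ _
    have hd'anti : ∀ i j, 1 ≤ i → i ≤ j → d' j ≤ d' i := by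
      intro i j _ hij
      simp only [hd'def]
      exact Finset.card_le_card
        (Finset.monotone_filter_right _ (fun t _ (ht : j ≤ p' t) => le_trans hij ht))
    have hsum_ind : ∑ i ∈ Finset.Icc 1 n, (if i ≤ m then 1 else 0) = m := by
      rw [← Finset.card_filter]
      exact card_filter_le_Icc n m hmn
    have hsum' : ∑ i ∈ Finset.Icc 1 n, d' i + m = n := by
      have h1 : ∑ i ∈ Finset.Icc 1 n, d i
          = ∑ i ∈ Finset.Icc 1 n, (d' i + if i ≤ m then 1 else 0) :=
        Finset.sum_congr rfl (fun i hi => hC1 i (Finset.mem_Icc.mp hi).1)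
      rw [Finset.sum_add_distrib, hsum_ind] at h1
      omega
    have hd'zero : ∀ j, n - m < j → d' j = 0 := by
      intro j hj
      by_contra hne
      have hj1 : 1 ≤ d' j := by omega
      rcases le_or_gt j n with hjn | hjn
      · have hall : ∀ i ∈ Finset.Icc 1 j, 1 ≤ d' i := fun i hi =>
          le_trans hj1 (hd'anti i j (Finset.mem_Icc.mp hi).1 (Finset.mem_Icc.mp hi).2)
        have h2 : j ≤ ∑ i ∈ Finset.Icc 1 j, d' i := by
          calc j = ∑ _i ∈ Finset.Icc 1 j, 1 := by
                rw [Finset.sum_const, Nat.card_Icc, smul_eq_mul, mul_one]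
                omega
            _ ≤ _ := Finset.sum_le_sum hall
        have h3 : ∑ i ∈ Finset.Icc 1 j, d' i ≤ ∑ i ∈ Finset.Icc 1 n, d' i :=
          Finset.sum_le_sum_of_subset (Finset.Icc_subset_Icc_right hjn)
        omega
      · have h4 := hC1 j (by omega)
        have h5 := hdzero j hjn
        omega
    have hd'sum : ∑ i ∈ Finset.Icc 1 (n - m), d' i = n - m := by
      have he : ∑ i ∈ Finset.Icc 1 n, d' i = ∑ i ∈ Finset.Icc 1 (n - m), d' i := by
        symm
        apply Finset.sum_subset (Finset.Icc_subset_Icc_right (by omega))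
        intro i hi hni
        apply hd'zero
        simp only [Finset.mem_Icc] at hi hni
        omega
      omega
    have hc'ext : ∀ i, 1 ≤ i →
        ordEntry (n - m) d' i = ((Finset.Icc 1 n).filter fun j => i ≤ d' j).card := by
      intro i hi
      unfold ordEntry
      congr 1
      ext j
      simp only [Finset.mem_filter, Finset.mem_Icc]
      constructor
      · rintro ⟨⟨h1, h2⟩, h3⟩
        exact ⟨⟨h1, by omega⟩, h3⟩
      · rintro ⟨⟨h1, h2⟩, h3⟩
        refine ⟨⟨h1, ?_⟩, h3⟩
        by_contra hcon
        have := hd'zero j (by omega)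
        omega
    have hdm_le : ∀ j, m + 1 ≤ j → d j < a := by
      intro j hj
      have h1 : d j ≤ d (m + 1) := hanti (m + 1) j (by omega) hj
      omega
    have hc'lt : ∀ i, 1 ≤ i → i < a → ordEntry (n - m) d' i = ordEntry n d i := by
      intro i hi hia
      rw [hc'ext i hi]
      unfold ordEntry
      congr 1
      apply Finset.filter_congr
      intro j hj
      simp only [Finset.mem_Icc] at hj
      have hCj := hC1 j hj.1
      by_cases hjm : j ≤ m
      · rw [if_pos hjm] at hCj
        have haj : a ≤ d j := by
          rw [ha]
          exact hanti j m hj.1 hjm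
        omega
      · rw [if_neg hjm] at hCj
        omega
    have hc'ge : ∀ i, a ≤ i → ordEntry (n - m) d' i = ordEntry n d (i + 1) := by
      intro i hia
      rw [hc'ext i (by omega)]
      unfold ordEntry
      congr 1
      apply Finset.filter_congr
      intro j hj
      simp only [Finset.mem_Icc] at hj
      have hCj := hC1 j hj.1
      by_cases hjm : j ≤ m
      · rw [if_pos hjm] at hCj
        omega
      · rw [if_neg hjm] at hCj
        have := hdm_le j (by omega)
        omega
    have hPcap1 : ∀ i, i + 1 ≤ a →
        finrank ℂ (P ⊓ LinearMap.range (x ^ i) : Submodule ℂ V) = m := by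
      intro i hia
      have hle : P ≤ LinearMap.range (x ^ i) := le_trans hPrange (hrange i (a - 1) (by omega))
      rw [inf_of_le_left hle]
      exact hPrank
    have hPcap2 : ∀ i, a ≤ i →
        finrank ℂ (P ⊓ LinearMap.range (x ^ i) : Submodule ℂ V)
          = ordEntry n d (i + 1) := by
      intro i hia
      have heq : (P ⊓ LinearMap.range (x ^ i) : Submodule ℂ V)
          = LinearMap.ker x ⊓ LinearMap.range (x ^ i) := by
        apply le_antisymm
        · exact inf_le_inf_right _ hPker
        · intro z hz
          rw [Submodule.mem_inf] at hz ⊢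
          refine ⟨hAP ?_, hz.2⟩
          rw [Submodule.mem_inf]
          exact ⟨hz.1, hrange a i hia hz.2⟩
      rw [heq]
      exact hinfdim i
    have hKq : ∀ i, finrank ℂ (LinearMap.ker (xq ^ i)) + m
        = finrank ℂ (LinearMap.ker (x ^ i))
          + finrank ℂ (P ⊓ LinearMap.range (x ^ i) : Submodule ℂ V) := by
      intro i
      have hle : P ≤ P.comap (x ^ i) := P.le_comap_pow_of_le_comap hcom i
      rw [hxq, ← Submodule.mapQ_pow, ker_mapQ]
      have h1 := finrank_map_mkQ P (P.comap (x ^ i)) hle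
      have h2 := finrank_comap_eq (x ^ i) P
      rw [hPrank] at h1
      omega
    have hKq' : ∀ i, 1 ≤ i → finrank ℂ (LinearMap.ker (xq ^ i))
        = finrank ℂ (LinearMap.ker (xq ^ (i - 1))) + ordEntry (n - m) d' i := by
      intro i hi
      have e1 := hKq i
      have e2 := hKq (i - 1)
      have e3 := hker i hi
      rcases lt_trichotomy i a with hlt | heq | hgt
      · rw [hPcap1 i (by omega)] at e1
        rw [hPcap1 (i - 1) (by omega)] at e2
        rw [hc'lt i hi hlt]
        omega
      · rw [hPcap2 i (by omega)] at e1
        rw [hPcap1 (i - 1) (by omega)] at e2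
        rw [hc'ge i (by omega)]
        have h4 : ordEntry n d i = m := by rw [heq]; exact hca
        omega
      · rw [hPcap2 i (by omega)] at e1
        rw [hPcap2 (i - 1) (by omega)] at e2
        rw [show i - 1 + 1 = i from by omega] at e2
        rw [hc'ge i (by omega)]
        omega
    have hd'J : HasJordanType (n - m) xq d' := ⟨⟨hd'anti, hd'zero, hd'sum⟩, hKq'⟩
    obtain ⟨G, hGflag, hGmap⟩ := ih (V ⧸ P) (n - m) hVq xq d' hd'J p'
      (fun j h1 h2 => by rw [hp'def]; exact hp (j + 1) (by omega) (by omega))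
      (fun i hi => by rw [hd'def])
    obtain ⟨hG0, hGs, hGmono, hGdim⟩ := hGflag
    have hcomapdim : ∀ Q' : Submodule ℂ (V ⧸ P),
        finrank ℂ (Q'.comap P.mkQ) = finrank ℂ Q' + m := by
      intro Q'
      have hle : P ≤ Q'.comap P.mkQ := by
        intro v hv
        rw [Submodule.mem_comap]
        have hz : P.mkQ v = 0 := by rwa [← LinearMap.mem_ker, Submodule.ker_mkQ]
        rw [hz]
        exact Q'.zero_mem
      have h1 := finrank_map_mkQ P (Q'.comap P.mkQ) hle
      rw [Submodule.map_comap_eq_self (by rw [Submodule.range_mkQ]; exact le_top), hPrank] at h1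
      omega
    obtain ⟨F, hF⟩ : ∃ F : ℕ → Submodule ℂ V,
        ∀ i, F i = if i = 0 then ⊥ else (G (i - 1)).comap P.mkQ :=
      ⟨fun i => if i = 0 then ⊥ else (G (i - 1)).comap P.mkQ, fun _ => rfl⟩
    have hF0 : F 0 = ⊥ := by rw [hF 0, if_pos rfl]
    have hFpos : ∀ i, i ≠ 0 → F i = (G (i - 1)).comap P.mkQ := by
      intro i hi
      rw [hF i, if_neg hi]
    have hF1 : F 1 = P := by
      rw [hFpos 1 one_ne_zero, show (1 : ℕ) - 1 = 0 from rfl, hG0, Submodule.comap_bot,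
        Submodule.ker_mkQ]
    refine ⟨F, ⟨hF0, ?_, ?_, ?_⟩, ?_⟩
    · rw [hFpos (s + 1) (Nat.succ_ne_zero s), show s + 1 - 1 = s from rfl, hGs,
        Submodule.comap_top]
    · intro i h1 h2
      rcases eq_or_lt_of_le h1 with h1' | h1'
      · rw [← h1', show (1 : ℕ) - 1 = 0 from rfl, hF0]
        exact bot_le
      · rw [hFpos i (by omega), hFpos (i - 1) (by omega)]
        exact Submodule.comap_mono (hGmono (i - 1) (by omega) (by omega))
    · intro i h1 h2
      rcases eq_or_lt_of_le h1 with h1' | h1'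
      · rw [← h1', show (1 : ℕ) - 1 = 0 from rfl, hF1, hF0, finrank_bot, hPrank]
        omega
      · rw [hFpos i (by omega), hFpos (i - 1) (by omega)]
        rw [hcomapdim, hcomapdim, hGdim (i - 1) (by omega) (by omega)]
        have hpp : p' (i - 1) = p i := by
          rw [hp'def]
          show p (i - 1 + 1) = p i
          congr 1
          omega
        omega
    · intro i h1 h2
      rcases eq_or_lt_of_le h1 with h1' | h1'
      · rw [← h1', show (1 : ℕ) - 1 = 0 from rfl, hF1, hF0]
        rintro z hz
        rw [Submodule.mem_map] at hz
        obtain ⟨v, hv, rfl⟩ := hz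
        rw [Submodule.mem_bot]
        exact LinearMap.mem_ker.mp (hPker hv)
      · rw [hFpos i (by omega), hFpos (i - 1) (by omega)]
        rintro z hz
        rw [Submodule.mem_map] at hz
        obtain ⟨v, hv, rfl⟩ := hz
        rw [Submodule.mem_comap] at hv ⊢
        have hx : P.mkQ ((x : V →ₗ[ℂ] V) v) = xq (P.mkQ v) := by
          rw [hxq, Submodule.mkQ_apply, Submodule.mkQ_apply, Submodule.mapQ_apply]
        rw [hx]
        exact hGmap (i - 1) (by omega) (by omega) ⟨P.mkQ v, hv, rfl⟩

/-- Existence part of Theorem 2.6: if `x` is nilpotent of Jordan type `d` and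
`ord(p_1,…,p_s) = d`, then there is a flag `F` of type `(p_1,…,p_s)` with
`x F_i ⊆ F_{i−1}` for all `1 ≤ i ≤ s`. -/
theorem stmt0 {V : Type*} [AddCommGroup V] [Module ℂ V] [FiniteDimensional ℂ V]
    (n : ℕ) (hV : finrank ℂ V = n) (x : Module.End ℂ V) (hx : IsNilpotent x)
    (d : ℕ → ℕ) (hd : HasJordanType n x d)
    (s : ℕ) (p : ℕ → ℕ) (hp : ∀ j, 1 ≤ j → j ≤ s → 1 ≤ p j)
    (hord : ∀ i, 1 ≤ i → ordEntry s p i = d i) :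
    ∃ F : ℕ → Submodule ℂ V, IsFlagOfType s p F ∧
      ∀ i, 1 ≤ i → i ≤ s → (F i).map (x : V →ₗ[ℂ] V) ≤ F (i - 1) := by
  exact flag_exists_aux s V n hV x d hd p hp hord
end

section
/- Let x be a nilpotent endomorphism of an n-dimensional complex vector space V with Jordan type d, and let (p_1,…,p_s) be a sequence of positive integers with ord(p_1,…,p_s) = d. If F and F' are two flags of type (p_1,…,p_s) in V such that x F_i ⊆ F_{i−1} and x F'_i ⊆ F'_{i−1} for all 1 ≤ i ≤ s, then F_i = F'_i for all i; that is, the flag of Theorem 2.6 is unique. (Uniqueness part of Theorem 2.6.) -/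
open Module

universe u

open Submodule

open Submodule in
lemma lemD {V : Type u} [AddCommGroup V] [Module ℂ V] [FiniteDimensional ℂ V]
    (x : Module.End ℂ V) (p : ℕ → ℕ) :
    ∀ (σ : ℕ) (F : ℕ → Submodule ℂ V), F 0 = ⊥ →
    (∀ i, 1 ≤ i → i ≤ σ → (F (i - 1)) ≤ F i) →
    (∀ i, 1 ≤ i → i ≤ σ → (F i).map (x : V →ₗ[ℂ] V) ≤ F (i - 1)) →
    (∀ i, 1 ≤ i → i ≤ σ → finrank ℂ (F i) = finrank ℂ (F (i - 1)) + p i) →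
    ∀ S : Finset ℕ, S ⊆ Finset.Icc 1 σ →
    (∑ t ∈ S, p t) ≤ finrank ℂ ((LinearMap.ker (x ^ S.card)) ⊓ F σ : Submodule ℂ V) := by
  intro σ
  induction σ with
  | zero =>
    intro F hF0 _ _ _ S hS
    have : S = ∅ := by
      rw [Finset.Icc_eq_empty (by omega)] at hS
      exact Finset.subset_empty.mp hS
    subst this
    simp
  | succ σ IH =>
    intro F hF0 hmono hcomp hdim S hS
    by_cases hmem : σ + 1 ∈ S
    · set S' := S.erase (σ + 1) with hS'def
      have hcard : S'.card + 1 = S.card := Finset.card_erase_add_one hmem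
      have hS'sub : S' ⊆ Finset.Icc 1 σ := by
        intro t ht
        have h1 := hS (Finset.mem_of_mem_erase ht)
        have h2 := Finset.ne_of_mem_erase ht
        simp only [Finset.mem_Icc] at h1 ⊢
        omega
      have hIH := IH F hF0 (fun i h1 h2 => hmono i h1 (by omega))
        (fun i h1 h2 => hcomp i h1 (by omega)) (fun i h1 h2 => hdim i h1 (by omega)) S' hS'sub
      set U : Submodule ℂ V := (LinearMap.ker (x ^ S'.card)) ⊓ F σ with hUdef
      have hUle : U ≤ F σ := inf_le_right
      set h : ↥(F (σ + 1)) →ₗ[ℂ] V ⧸ U := U.mkQ ∘ₗ (x : V →ₗ[ℂ] V) ∘ₗ (F (σ + 1)).subtype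
        with hhdef
      have hrn : finrank ℂ (LinearMap.range h) + finrank ℂ (LinearMap.ker h)
          = finrank ℂ (F (σ + 1)) :=
        LinearMap.finrank_range_add_finrank_ker h
      have hrange : LinearMap.range h ≤ Submodule.map U.mkQ (F σ) := by
        rintro w ⟨⟨v, hv⟩, rfl⟩
        refine ⟨x v, ?_, rfl⟩
        have := hcomp (σ + 1) (by omega) le_rfl
        simpa using this ⟨v, hv, rfl⟩
      have hmap : finrank ℂ (Submodule.map U.mkQ (F σ)) + finrank ℂ U = finrank ℂ (F σ) := by
        have h2 : LinearMap.range (U.mkQ ∘ₗ (F σ).subtype) = Submodule.map U.mkQ (F σ) := by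
          rw [LinearMap.range_comp, Submodule.range_subtype]
        have h3 : LinearMap.ker (U.mkQ ∘ₗ (F σ).subtype) = comap (F σ).subtype U := by
          rw [LinearMap.ker_comp, Submodule.ker_mkQ]
        have h4 := LinearMap.finrank_range_add_finrank_ker (U.mkQ ∘ₗ (F σ).subtype)
        rw [h2, h3] at h4
        rwa [(Submodule.comapSubtypeEquivOfLe hUle).finrank_eq] at h4
      have hkerle : Submodule.map (F (σ + 1)).subtype (LinearMap.ker h)
          ≤ LinearMap.ker (x ^ S.card) ⊓ F (σ + 1) := by
        rintro w ⟨⟨v, hv⟩, hkv, rfl⟩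
        refine ⟨?_, hv⟩
        have hxvU : x v ∈ U := by
          have : h ⟨v, hv⟩ = 0 := hkv
          rw [hhdef] at this
          simpa [Submodule.Quotient.mk_eq_zero] using this
        have hxv : (x ^ S'.card) (x v) = 0 := hxvU.1
        show (x ^ S.card) v = 0
        rw [← hcard, pow_succ]
        simpa using hxv
      have hfr : finrank ℂ (Submodule.map (F (σ + 1)).subtype (LinearMap.ker h))
          = finrank ℂ (LinearMap.ker h) := Submodule.finrank_map_subtype_eq _ _
      have hm1 := Submodule.finrank_mono hkerle
      have hm2 := Submodule.finrank_mono hrange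
      have hsum : ∑ t ∈ S, p t = p (σ + 1) + ∑ t ∈ S', p t :=
        (Finset.add_sum_erase _ _ hmem).symm
      have hd : finrank ℂ (F (σ + 1)) = finrank ℂ (F σ) + p (σ + 1) := by
        have := hdim (σ + 1) (by omega) le_rfl
        simpa using this
      omega
    · have hS' : S ⊆ Finset.Icc 1 σ := by
        intro t ht
        have h1 := hS ht
        simp only [Finset.mem_Icc] at h1 ⊢
        have : t ≠ σ + 1 := fun h => hmem (h ▸ ht)
        omega
      have hIH := IH F hF0 (fun i h1 h2 => hmono i h1 (by omega))
        (fun i h1 h2 => hcomp i h1 (by omega)) (fun i h1 h2 => hdim i h1 (by omega)) S hS'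
      refine hIH.trans (Submodule.finrank_mono (inf_le_inf_left _ ?_))
      have := hmono (σ + 1) (by omega) le_rfl
      simpa using this

theorem mainAux : ∀ (s : ℕ) {V : Type u} [AddCommGroup V] [Module ℂ V]
    [FiniteDimensional ℂ V]
    (n : ℕ) (_hV : finrank ℂ V = n) (x : Module.End ℂ V) (_hx : IsNilpotent x)
    (d : ℕ → ℕ) (_hd : HasJordanType n x d)
    (p : ℕ → ℕ) (_hp : ∀ j, 1 ≤ j → j ≤ s → 1 ≤ p j)
    (_hord : ∀ i, 1 ≤ i → ordEntry s p i = d i)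
    (F F' : ℕ → Submodule ℂ V)
    (_hF : IsFlagOfType s p F) (_hF' : IsFlagOfType s p F')
    (_hxF : ∀ i, 1 ≤ i → i ≤ s → (F i).map (x : V →ₗ[ℂ] V) ≤ F (i - 1))
    (_hxF' : ∀ i, 1 ≤ i → i ≤ s → (F' i).map (x : V →ₗ[ℂ] V) ≤ F' (i - 1)),
    ∀ i, i ≤ s → F i = F' i := by
  intro s
  induction s with
  | zero =>
    intro V _ _ _ n hV x hx d hd p hp hord F F' hF hF' hxF hxF' i hi
    have : i = 0 := by omega
    subst this
    rw [hF.1, hF'.1]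
  | succ ℓ IH =>
    intro V _ _ _ n hV x hx d hd p hp hord F F' hF hF' hxF hxF'
    obtain ⟨⟨hdec, hdzero, hdsum⟩, hker⟩ := hd
    set b := p (ℓ + 1) with hbdef
    have b1 : 1 ≤ b := hp (ℓ + 1) (by omega) le_rfl
    -- cumulative dimensions of a flag
    have flagdim : ∀ (G : ℕ → Submodule ℂ V), IsFlagOfType (ℓ + 1) p G →
        ∀ i, i ≤ ℓ + 1 → finrank ℂ (G i) = ∑ j ∈ Finset.Icc 1 i, p j := by
      intro G hG i
      induction i with
      | zero =>
        intro _
        rw [Finset.Icc_eq_empty (by omega), hG.1]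
        simp
      | succ i ih =>
        intro hi
        have h1 : finrank ℂ (G (i + 1)) = finrank ℂ (G i) + p (i + 1) := by
          have := hG.2.2.2 (i + 1) (by omega) hi
          simpa using this
        rw [Finset.sum_Icc_succ_top (by omega : 1 ≤ i + 1), h1, ih (by omega)]
    have hsum_p : ∑ j ∈ Finset.Icc 1 (ℓ + 1), p j = n := by
      have h1 := flagdim F hF (ℓ + 1) le_rfl
      rw [hF.2.1, finrank_top] at h1
      rw [← h1, hV]
    have hpn : ∀ t, t ∈ Finset.Icc 1 (ℓ + 1) → p t ≤ n := by
      intro t ht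
      calc p t ≤ ∑ j ∈ Finset.Icc 1 (ℓ + 1), p j :=
            Finset.single_le_sum (fun _ _ => Nat.zero_le _) ht
        _ = n := hsum_p
    have bn : b ≤ n := hpn (ℓ + 1) (by simp)
    set S : Finset ℕ := (Finset.Icc 1 ℓ).filter (fun j => b ≤ p j) with hSdef
    set mh : ℕ := S.card with hmhdef
    have ordsplit : ∀ i, ordEntry (ℓ + 1) p i = ordEntry ℓ p i + if i ≤ b then 1 else 0 := by
      intro i
      unfold ordEntry
      rw [Finset.card_filter, Finset.card_filter,
        Finset.sum_Icc_succ_top (by omega : 1 ≤ ℓ + 1)]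
    have hdb : d b = mh + 1 := by
      rw [← hord b b1, ordsplit b, if_pos le_rfl]
      rfl
    have hdrop : d (b + 1) < d b := by
      rw [← hord b b1, ← hord (b + 1) (by omega)]
      apply Finset.card_lt_card
      rw [Finset.ssubset_iff_of_subset (Finset.monotone_filter_right _ (fun t ht => by omega))]
      refine ⟨ℓ + 1, ?_, ?_⟩
      · simp only [Finset.mem_filter, Finset.mem_Icc]
        omega
      · simp only [Finset.mem_filter, Finset.mem_Icc]
        omega
    have he : ordEntry n d (mh + 1) = b := by
      have hfil : (Finset.Icc 1 n).filter (fun j => mh + 1 ≤ d j) = Finset.Icc 1 b := by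
        ext j
        simp only [Finset.mem_filter, Finset.mem_Icc]
        constructor
        · rintro ⟨⟨h1, h2⟩, h3⟩
          refine ⟨h1, ?_⟩
          by_contra hc
          push_neg at hc
          have h4 : d j ≤ d (b + 1) := hdec (b + 1) j (by omega) (by omega)
          omega
        · rintro ⟨h1, h2⟩
          have h3 : d b ≤ d j := hdec j b h1 h2
          exact ⟨⟨h1, by omega⟩, by omega⟩
      rw [ordEntry, hfil, Nat.card_Icc]
      omega
    have hkstep : ∀ m : ℕ, finrank ℂ (LinearMap.ker (x ^ (m + 1))) =
        finrank ℂ (LinearMap.ker (x ^ m)) + ordEntry n d (m + 1) := by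
      intro m
      have := hker (m + 1) (by omega)
      simpa using this
    have Kmono : ∀ {a c : ℕ}, a ≤ c → LinearMap.ker (x ^ a) ≤ LinearMap.ker (x ^ c) := by
      intro a c hac
      induction c with
      | zero =>
        have : a = 0 := by omega
        subst this; exact le_rfl
      | succ c ih =>
        rcases Nat.lt_or_ge a (c + 1) with h | h
        · refine (ih (by omega)).trans ?_
          intro v hv
          have hv0 : (x ^ c) v = 0 := hv
          show (x ^ (c + 1)) v = 0
          rw [pow_succ']
          show x ((x ^ c) v) = 0
          rw [hv0, map_zero]
        · have : a = c + 1 := by omega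
          subst this; exact le_rfl
    have hmapK : ∀ a : ℕ, Submodule.map (x : V →ₗ[ℂ] V) (LinearMap.ker (x ^ (a + 1)))
        = LinearMap.ker (x ^ a) ⊓ LinearMap.range (x : V →ₗ[ℂ] V) := by
      intro a
      apply le_antisymm
      · rintro w ⟨v, hv, rfl⟩
        refine ⟨?_, ⟨v, rfl⟩⟩
        have hv0 : (x ^ (a + 1)) v = 0 := hv
        rw [pow_succ] at hv0
        simpa using hv0
      · rintro w ⟨hw, v, rfl⟩
        refine ⟨v, ?_, rfl⟩
        show (x ^ (a + 1)) v = 0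
        rw [pow_succ]
        simpa using hw
    have hinfK : ∀ a : ℕ,
        finrank ℂ (LinearMap.ker (x ^ a) ⊓ LinearMap.range (x : V →ₗ[ℂ] V) : Submodule ℂ V)
          + finrank ℂ (LinearMap.ker (x ^ 1)) = finrank ℂ (LinearMap.ker (x ^ (a + 1))) := by
      intro a
      have hrn := LinearMap.finrank_range_add_finrank_ker
        ((x : V →ₗ[ℂ] V) ∘ₗ (LinearMap.ker (x ^ (a + 1))).subtype)
      have h1 : LinearMap.range ((x : V →ₗ[ℂ] V) ∘ₗ (LinearMap.ker (x ^ (a + 1))).subtype)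
          = LinearMap.ker (x ^ a) ⊓ LinearMap.range (x : V →ₗ[ℂ] V) := by
        rw [LinearMap.range_comp, Submodule.range_subtype, hmapK a]
      have h2 : LinearMap.ker ((x : V →ₗ[ℂ] V) ∘ₗ (LinearMap.ker (x ^ (a + 1))).subtype)
          = comap (LinearMap.ker (x ^ (a + 1))).subtype (LinearMap.ker (x ^ 1)) := by
        rw [LinearMap.ker_comp, pow_one]
      rw [h1, h2,
        (Submodule.comapSubtypeEquivOfLe (Kmono (by omega : 1 ≤ a + 1))).finrank_eq] at hrn
      exact hrn
    have hrange_n : finrank ℂ (LinearMap.range (x : V →ₗ[ℂ] V))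
        + finrank ℂ (LinearMap.ker (x ^ 1)) = n := by
      have h1 := LinearMap.finrank_range_add_finrank_ker (x : V →ₗ[ℂ] V)
      rw [hV] at h1
      rw [pow_one]
      exact h1
    have hL6 : finrank ℂ (LinearMap.ker (x ^ mh)) ≤ ∑ t ∈ S, p t := by
      have ksum : finrank ℂ (LinearMap.ker (x ^ mh)) = ∑ r ∈ Finset.Icc 1 mh, ordEntry n d r := by
        generalize mh = M
        induction M with
        | zero =>
          rw [Finset.Icc_eq_empty (by omega)]
          simp [Module.End.one_eq_id]
        | succ M ih =>
          rw [hkstep M, ih, Finset.sum_Icc_succ_top (by omega : 1 ≤ M + 1)]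
      rw [ksum]
      have hswap2 : ∑ t ∈ S, p t = ∑ t ∈ S, ∑ j ∈ Finset.Icc 1 n, (if j ≤ p t then 1 else 0) := by
        apply Finset.sum_congr rfl
        intro t ht
        rw [← Finset.card_filter]
        have htI : t ∈ Finset.Icc 1 (ℓ + 1) := by
          have := Finset.mem_of_mem_filter t ht
          simp only [Finset.mem_Icc] at this ⊢
          omega
        have hptn := hpn t htI
        have hf : (Finset.Icc 1 n).filter (fun j => j ≤ p t) = Finset.Icc 1 (p t) := by
          ext j
          simp only [Finset.mem_filter, Finset.mem_Icc]
          omega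
        rw [hf, Nat.card_Icc]
        omega
      have hswap1 : ∑ r ∈ Finset.Icc 1 mh, ordEntry n d r
          = ∑ r ∈ Finset.Icc 1 mh, ∑ j ∈ Finset.Icc 1 n, (if r ≤ d j then 1 else 0) := by
        apply Finset.sum_congr rfl
        intro r _
        rw [ordEntry, Finset.card_filter]
      rw [hswap1, hswap2, Finset.sum_comm, Finset.sum_comm (s := S)]
      apply Finset.sum_le_sum
      intro j hj
      simp only [Finset.mem_Icc] at hj
      rw [← Finset.card_filter, ← Finset.card_filter]
      by_cases hjb : j ≤ b
      · have h1 : S.filter (fun t => j ≤ p t) = S := by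
          apply Finset.filter_true_of_mem
          intro t ht
          have h2 : b ≤ p t := (Finset.mem_filter.mp ht).2
          omega
        rw [h1]
        calc ((Finset.Icc 1 mh).filter fun r => r ≤ d j).card
            ≤ (Finset.Icc 1 mh).card := Finset.card_filter_le _ _
          _ = mh := by rw [Nat.card_Icc]; omega
      · push_neg at hjb
        have hLHS : ((Finset.Icc 1 mh).filter fun r => r ≤ d j).card ≤ d j := by
          have hsub : ((Finset.Icc 1 mh).filter fun r => r ≤ d j) ⊆ Finset.Icc 1 (d j) := by
            intro r hr
            simp only [Finset.mem_filter, Finset.mem_Icc] at hr ⊢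
            omega
          calc _ ≤ (Finset.Icc 1 (d j)).card := Finset.card_le_card hsub
            _ = d j := by rw [Nat.card_Icc]; omega
        have hRHS : d j ≤ (S.filter fun t => j ≤ p t).card := by
          rw [← hord j (by omega)]
          show ((Finset.Icc 1 (ℓ + 1)).filter fun t => j ≤ p t).card ≤ _
          apply Finset.card_le_card
          intro t ht
          simp only [Finset.mem_filter, Finset.mem_Icc, hSdef] at ht ⊢
          have htne : t ≠ ℓ + 1 := by
            intro hteq
            rw [hteq] at ht
            omega
          refine ⟨⟨⟨ht.1.1, by omega⟩, by omega⟩, ht.2⟩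
        omega
    -- pinning the coatom of the flag
    have pin : ∀ (G : ℕ → Submodule ℂ V), IsFlagOfType (ℓ + 1) p G →
        (∀ i, 1 ≤ i → i ≤ ℓ + 1 → (G i).map (x : V →ₗ[ℂ] V) ≤ G (i - 1)) →
        G ℓ = LinearMap.ker (x ^ mh) ⊔ LinearMap.range (x : V →ₗ[ℂ] V) := by
      intro G hG hxG
      have hRle : LinearMap.range (x : V →ₗ[ℂ] V) ≤ G ℓ := by
        have h1 := hxG (ℓ + 1) (by omega) le_rfl
        rw [hG.2.1] at h1
        simpa [Submodule.map_top] using h1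
      have hdimGl : finrank ℂ (G ℓ) + b = n := by
        have h1 : finrank ℂ (G (ℓ + 1)) = finrank ℂ (G ℓ) + p (ℓ + 1) := by
          simpa using hG.2.2.2 (ℓ + 1) (by omega) le_rfl
        rw [hG.2.1, finrank_top, hV] at h1
        omega
      have hld := lemD x p ℓ G hG.1 (fun i h1 h2 => hG.2.2.1 i h1 (by omega))
        (fun i h1 h2 => hxG i h1 (by omega)) (fun i h1 h2 => hG.2.2.2 i h1 (by omega))
        S (Finset.filter_subset _ _)
      rw [← hmhdef] at hld
      have heq : LinearMap.ker (x ^ mh) ⊓ G ℓ = LinearMap.ker (x ^ mh) := by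
        apply Submodule.eq_of_le_of_finrank_le inf_le_left
        exact hL6.trans hld
      have hKle : LinearMap.ker (x ^ mh) ≤ G ℓ := by
        rw [← heq]; exact inf_le_right
      have hWle : LinearMap.ker (x ^ mh) ⊔ LinearMap.range (x : V →ₗ[ℂ] V) ≤ G ℓ :=
        sup_le hKle hRle
      have hWdim : finrank ℂ
          (LinearMap.ker (x ^ mh) ⊔ LinearMap.range (x : V →ₗ[ℂ] V) : Submodule ℂ V) + b = n := by
        have h5 := Submodule.finrank_sup_add_finrank_inf_eq
          (LinearMap.ker (x ^ mh)) (LinearMap.range (x : V →ₗ[ℂ] V))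
        have h6 := hinfK mh
        have h8 := hkstep mh
        omega
      refine (Submodule.eq_of_le_of_finrank_le hWle (by omega)).symm
    have hWF : F ℓ = LinearMap.ker (x ^ mh) ⊔ LinearMap.range (x : V →ₗ[ℂ] V) :=
      pin F hF hxF
    have hWF' : F' ℓ = LinearMap.ker (x ^ mh) ⊔ LinearMap.range (x : V →ₗ[ℂ] V) :=
      pin F' hF' hxF'
    have hdimFl : finrank ℂ (F ℓ) + b = n := by
      have h1 : finrank ℂ (F (ℓ + 1)) = finrank ℂ (F ℓ) + p (ℓ + 1) := by
        simpa using hF.2.2.2 (ℓ + 1) (by omega) le_rfl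
      rw [hF.2.1, finrank_top, hV] at h1
      omega
    -- restriction of x to W = F ℓ
    have hstab : ∀ v ∈ F ℓ, x v ∈ F ℓ := by
      intro v _
      rw [hWF]
      exact Submodule.mem_sup_right ⟨v, rfl⟩
    set y : Module.End ℂ ↥(F ℓ) := (x : V →ₗ[ℂ] V).restrict hstab with hydef
    have hkery : ∀ m : ℕ, LinearMap.ker (y ^ m)
        = comap (F ℓ).subtype (LinearMap.ker (x ^ m)) := by
      intro m
      rw [hydef, Module.End.pow_restrict, LinearMap.ker_restrict]
    have hcomapfr : ∀ T : Submodule ℂ V,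
        finrank ℂ (comap (F ℓ).subtype T) = finrank ℂ (T ⊓ F ℓ : Submodule ℂ V) := by
      intro T
      have h1 : comap (F ℓ).subtype T = comap (F ℓ).subtype (T ⊓ F ℓ) := by
        ext v
        simp [Submodule.mem_comap, Submodule.mem_inf, SetLike.coe_mem]
      rw [h1, (Submodule.comapSubtypeEquivOfLe inf_le_right).finrank_eq]
    have kdim1 : ∀ m : ℕ, m ≤ mh → finrank ℂ (LinearMap.ker (y ^ m))
        = finrank ℂ (LinearMap.ker (x ^ m)) := by
      intro m hm
      rw [hkery, hcomapfr]
      have h1 : LinearMap.ker (x ^ m) ⊓ F ℓ = LinearMap.ker (x ^ m) := by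
        apply inf_eq_left.mpr
        refine (Kmono hm).trans ?_
        rw [hWF]
        exact le_sup_left
      rw [h1]
    have kdim2 : ∀ m : ℕ, mh < m → finrank ℂ (LinearMap.ker (y ^ m)) + b
        = finrank ℂ (LinearMap.ker (x ^ (m + 1))) := by
      intro m hm
      rw [hkery, hcomapfr]
      have hmod : LinearMap.ker (x ^ m) ⊓ F ℓ
          = LinearMap.ker (x ^ mh) ⊔ (LinearMap.ker (x ^ m) ⊓ LinearMap.range (x : V →ₗ[ℂ] V)) := by
        rw [hWF, inf_comm, sup_inf_assoc_of_le _ (Kmono (by omega : mh ≤ m)),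
          inf_comm (LinearMap.range (x : V →ₗ[ℂ] V)) (LinearMap.ker (x ^ m))]
      rw [hmod]
      have h5 := Submodule.finrank_sup_add_finrank_inf_eq
        (LinearMap.ker (x ^ mh)) (LinearMap.ker (x ^ m) ⊓ LinearMap.range (x : V →ₗ[ℂ] V))
      have h6 : LinearMap.ker (x ^ mh) ⊓ (LinearMap.ker (x ^ m) ⊓ LinearMap.range (x : V →ₗ[ℂ] V))
          = LinearMap.ker (x ^ mh) ⊓ LinearMap.range (x : V →ₗ[ℂ] V) := by
        ext v
        simp only [Submodule.mem_inf]
        constructor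
        · rintro ⟨h1, _, h2⟩; exact ⟨h1, h2⟩
        · rintro ⟨h1, h2⟩; exact ⟨h1, Kmono (by omega : mh ≤ m) h1, h2⟩
      rw [h6] at h5
      have h7 := hinfK m
      have h8 := hinfK mh
      have h9 := hkstep mh
      omega
    -- the shifted partition d'
    set d' : ℕ → ℕ := fun i => ordEntry ℓ p i with hd'def
    have hd'd : ∀ i, 1 ≤ i → d i = d' i + (if i ≤ b then 1 else 0) := by
      intro i hi
      rw [← hord i hi, ordsplit i]
    have hd'dec : ∀ i j, 1 ≤ i → i ≤ j → d' j ≤ d' i := by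
      intro i j h1 h2
      have hdi := hd'd i h1
      have hdj := hd'd j (by omega)
      have hij := hdec i j h1 h2
      by_cases hjb : j ≤ b
      · have hib : i ≤ b := by omega
        rw [if_pos hjb] at hdj
        rw [if_pos hib] at hdi
        omega
      · by_cases hib : i ≤ b
        · have h3 : d j ≤ d (b + 1) := hdec (b + 1) j (by omega) (by omega)
          rw [if_neg hjb] at hdj
          rw [if_pos hib] at hdi
          have h4 : d b ≤ d i := hdec i b h1 hib
          omega
        · rw [if_neg hjb] at hdj
          rw [if_neg hib] at hdi
          omega
    have hd'le : ∀ j, 1 ≤ j → d' j ≤ d j := by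
      intro j hj
      have h1 := hd'd j hj
      by_cases h : j ≤ b
      · rw [if_pos h] at h1; omega
      · rw [if_neg h] at h1; omega
    have hd'sum_n : (∑ j ∈ Finset.Icc 1 n, d' j) + b = n := by
      have h2 : ∑ j ∈ Finset.Icc 1 n, d j
          = ∑ j ∈ Finset.Icc 1 n, (d' j + if j ≤ b then 1 else 0) := by
        apply Finset.sum_congr rfl
        intro j hj
        exact hd'd j (Finset.mem_Icc.mp hj).1
      rw [Finset.sum_add_distrib] at h2
      have h3 : ∑ j ∈ Finset.Icc 1 n, (if j ≤ b then 1 else 0) = b := by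
        rw [← Finset.card_filter]
        have h4 : (Finset.Icc 1 n).filter (fun j => j ≤ b) = Finset.Icc 1 b := by
          ext j
          simp only [Finset.mem_filter, Finset.mem_Icc]
          omega
        rw [h4, Nat.card_Icc]
        omega
      rw [h3, hdsum] at h2
      omega
    have hd'zero : ∀ j, n - b < j → d' j = 0 := by
      intro j hj
      by_contra hc
      by_cases hjn : j ≤ n
      · have hlow : ∀ t ∈ Finset.Icc 1 j, 1 ≤ d' t := by
          intro t ht
          have := hd'dec t j (Finset.mem_Icc.mp ht).1 (Finset.mem_Icc.mp ht).2
          omega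
        have h4 : (Finset.Icc 1 j).card • 1 ≤ ∑ t ∈ Finset.Icc 1 j, d' t :=
          Finset.card_nsmul_le_sum _ _ _ hlow
        rw [Nat.card_Icc, smul_eq_mul, mul_one] at h4
        have h5 : ∑ t ∈ Finset.Icc 1 j, d' t ≤ ∑ t ∈ Finset.Icc 1 n, d' t :=
          Finset.sum_le_sum_of_subset (Finset.Icc_subset_Icc_right hjn)
        omega
      · have h6 := hd'le j (by omega)
        have h7 := hdzero j (by omega)
        omega
    have hd'sum : ∑ j ∈ Finset.Icc 1 (n - b), d' j = n - b := by
      have h1 : ∑ j ∈ Finset.Icc 1 (n - b), d' j = ∑ j ∈ Finset.Icc 1 n, d' j := by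
        apply Finset.sum_subset (Finset.Icc_subset_Icc_right (by omega))
        intro j hj1 hj2
        simp only [Finset.mem_Icc] at hj1 hj2
        exact hd'zero j (by omega)
      omega
    have he'ext : ∀ m, 1 ≤ m → ordEntry (n - b) d' m
        = ((Finset.Icc 1 n).filter (fun j => m ≤ d' j)).card := by
      intro m hm
      rw [ordEntry, Finset.card_filter, Finset.card_filter]
      apply Finset.sum_subset (Finset.Icc_subset_Icc_right (by omega))
      intro j hj1 hj2
      simp only [Finset.mem_Icc] at hj1 hj2
      have h1 : d' j = 0 := hd'zero j (by omega)
      rw [if_neg (by omega)]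
    have he'low : ∀ m, 1 ≤ m → m ≤ mh → ordEntry (n - b) d' m = ordEntry n d m := by
      intro m h1 h2
      rw [he'ext m h1, ordEntry]
      congr 1
      ext j
      simp only [Finset.mem_filter, Finset.mem_Icc]
      constructor
      · rintro ⟨hj, h4⟩
        have hdd := hd'd j hj.1
        refine ⟨hj, ?_⟩
        by_cases hjb : j ≤ b
        · rw [if_pos hjb] at hdd; omega
        · rw [if_neg hjb] at hdd; omega
      · rintro ⟨hj, h4⟩
        have hdd := hd'd j hj.1
        refine ⟨hj, ?_⟩
        by_cases hjb : j ≤ b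
        · have h3 : d b ≤ d j := hdec j b hj.1 hjb
          rw [if_pos hjb] at hdd
          omega
        · rw [if_neg hjb] at hdd; omega
    have he'high : ∀ m, mh < m → ordEntry (n - b) d' m = ordEntry n d (m + 1) := by
      intro m h1
      rw [he'ext m (by omega), ordEntry]
      congr 1
      ext j
      simp only [Finset.mem_filter, Finset.mem_Icc]
      constructor
      · rintro ⟨hj, h4⟩
        have hdd := hd'd j hj.1
        refine ⟨hj, ?_⟩
        by_cases hjb : j ≤ b
        · rw [if_pos hjb] at hdd; omega
        · have h3 : d j ≤ d (b + 1) := hdec (b + 1) j (by omega) (by omega)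
          rw [if_neg hjb] at hdd
          omega
      · rintro ⟨hj, h4⟩
        have hdd := hd'd j hj.1
        refine ⟨hj, ?_⟩
        by_cases hjb : j ≤ b
        · rw [if_pos hjb] at hdd; omega
        · have h3 : d j ≤ d (b + 1) := hdec (b + 1) j (by omega) (by omega)
          rw [if_neg hjb] at hdd
          omega
    -- Jordan type of the restriction
    have hdt' : HasJordanType (n - b) y d' := by
      refine ⟨⟨hd'dec, hd'zero, hd'sum⟩, ?_⟩
      intro m hm
      obtain ⟨m', rfl⟩ : ∃ m', m = m' + 1 := ⟨m - 1, by omega⟩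
      have hgoalsimp : (m' + 1 - 1) = m' := by omega
      rw [hgoalsimp]
      by_cases hc1 : m' + 1 ≤ mh
      · rw [kdim1 _ hc1, kdim1 _ (by omega), he'low _ (by omega) hc1]
        exact hkstep m'
      · have h1 := kdim2 (m' + 1) (by omega)
        have h3 := he'high (m' + 1) (by omega)
        have h4 := hkstep (m' + 1)
        by_cases hc2 : m' ≤ mh
        · have h6 : m' = mh := by omega
          have h2 := kdim1 m' hc2
          have h5 := hkstep m'
          rw [h6] at h1 h2 h3 h4 h5 ⊢
          omega
        · have h2 := kdim2 m' (by omega)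
          omega
    have hV' : finrank ℂ ↥(F ℓ) = n - b := by omega
    have hx' : IsNilpotent y := by
      obtain ⟨N, hN⟩ := hx
      refine ⟨N, ?_⟩
      rw [hydef, Module.End.pow_restrict]
      ext v
      have : (x ^ N) (v : V) = 0 := by rw [hN]; rfl
      simp [LinearMap.restrict_coe_apply, this]
    have hp' : ∀ j, 1 ≤ j → j ≤ ℓ → 1 ≤ p j := fun j h1 h2 => hp j h1 (by omega)
    have hord' : ∀ i, 1 ≤ i → ordEntry ℓ p i = d' i := fun i _ => rfl
    -- chain monotonicity
    have flagle : ∀ (G : ℕ → Submodule ℂ V), IsFlagOfType (ℓ + 1) p G →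
        ∀ i j, i ≤ j → j ≤ ℓ + 1 → G i ≤ G j := by
      intro G hG i j hij hj
      induction j with
      | zero =>
        have : i = 0 := by omega
        subst this; exact le_rfl
      | succ j ih =>
        rcases Nat.lt_or_ge i (j + 1) with h | h
        · refine (ih (by omega) (by omega)).trans ?_
          have h2 := hG.2.2.1 (j + 1) (by omega) hj
          simpa using h2
        · have : i = j + 1 := by omega
          subst this; exact le_rfl
    -- restricted flags
    have mkflag : ∀ (G : ℕ → Submodule ℂ V), IsFlagOfType (ℓ + 1) p G →
        (∀ i, 1 ≤ i → i ≤ ℓ + 1 → (G i).map (x : V →ₗ[ℂ] V) ≤ G (i - 1)) →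
        G ℓ = F ℓ →
        IsFlagOfType ℓ p (fun i => comap (F ℓ).subtype (G i)) ∧
        (∀ i, 1 ≤ i → i ≤ ℓ →
          (comap (F ℓ).subtype (G i)).map (y : ↥(F ℓ) →ₗ[ℂ] ↥(F ℓ))
            ≤ comap (F ℓ).subtype (G (i - 1))) := by
      intro G hG hxG hGl
      constructor
      · refine ⟨?_, ?_, ?_, ?_⟩
        · show comap (F ℓ).subtype (G 0) = ⊥
          rw [hG.1, Submodule.comap_bot, Submodule.ker_subtype]
        · show comap (F ℓ).subtype (G ℓ) = ⊤
          rw [hGl, Submodule.comap_subtype_self]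
        · intro i h1 h2
          exact Submodule.comap_mono (hG.2.2.1 i h1 (by omega))
        · intro i h1 h2
          have hle_i : G i ≤ F ℓ := by
            rw [← hGl]; exact flagle G hG i ℓ (by omega) (by omega)
          have hle_i1 : G (i - 1) ≤ F ℓ := by
            rw [← hGl]; exact flagle G hG (i - 1) ℓ (by omega) (by omega)
          have e1 : finrank ℂ (comap (F ℓ).subtype (G i)) = finrank ℂ (G i) :=
            (Submodule.comapSubtypeEquivOfLe hle_i).finrank_eq
          have e2 : finrank ℂ (comap (F ℓ).subtype (G (i - 1))) = finrank ℂ (G (i - 1)) :=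
            (Submodule.comapSubtypeEquivOfLe hle_i1).finrank_eq
          rw [e1, e2]
          exact hG.2.2.2 i h1 (by omega)
      · intro i h1 h2
        rintro w ⟨u, hu, rfl⟩
        have hu' : (u : V) ∈ G i := hu
        have hcoe : ((y u : ↥(F ℓ)) : V) = x (u : V) := by
          rw [hydef]
          exact LinearMap.restrict_coe_apply _ _ _
        show ((y u : ↥(F ℓ)) : V) ∈ G (i - 1)
        rw [hcoe]
        exact hxG i h1 (by omega) ⟨(u : V), hu', rfl⟩
    obtain ⟨hFG, hxG⟩ := mkflag F hF hxF rfl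
    obtain ⟨hFG', hxG'⟩ := mkflag F' hF' hxF' (hWF'.trans hWF.symm)
    have hIH := IH (n - b) hV' y hx' d' hdt' p hp' hord'
      (fun i => comap (F ℓ).subtype (F i)) (fun i => comap (F ℓ).subtype (F' i))
      hFG hFG' hxG hxG'
    intro i hi
    rcases Nat.lt_or_ge i (ℓ + 1) with h | h
    · have hGi := hIH i (by omega)
      have hFi : F i ≤ F ℓ := flagle F hF i ℓ (by omega) (by omega)
      have hFi' : F' i ≤ F ℓ := by
        refine (flagle F' hF' i ℓ (by omega) (by omega)).trans ?_
        rw [hWF', hWF]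
      have h1 : Submodule.map (F ℓ).subtype (comap (F ℓ).subtype (F i)) = F i := by
        rw [Submodule.map_comap_subtype]
        exact inf_eq_right.mpr hFi
      have h2 : Submodule.map (F ℓ).subtype (comap (F ℓ).subtype (F' i)) = F' i := by
        rw [Submodule.map_comap_subtype]
        exact inf_eq_right.mpr hFi'
      have hGi' : comap (F ℓ).subtype (F i) = comap (F ℓ).subtype (F' i) := hGi
      rw [← h1, hGi', h2]
    · have : i = ℓ + 1 := by omega
      subst this
      rw [hF.2.1, hF'.2.1]

/-- Uniqueness part of Theorem 2.6: if `x` is nilpotent of Jordan type `d`,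
`ord(p_1,…,p_s) = d`, and `F`, `F'` are flags of type `(p_1,…,p_s)` with
`x F_i ⊆ F_{i−1}` and `x F'_i ⊆ F'_{i−1}` for all `1 ≤ i ≤ s`, then `F_i = F'_i`
for all `i ≤ s`. -/
theorem stmt1 {V : Type*} [AddCommGroup V] [Module ℂ V] [FiniteDimensional ℂ V]
    (n : ℕ) (hV : finrank ℂ V = n) (x : Module.End ℂ V) (hx : IsNilpotent x)
    (d : ℕ → ℕ) (hd : HasJordanType n x d)
    (s : ℕ) (p : ℕ → ℕ) (hp : ∀ j, 1 ≤ j → j ≤ s → 1 ≤ p j)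
    (hord : ∀ i, 1 ≤ i → ordEntry s p i = d i)
    (F F' : ℕ → Submodule ℂ V)
    (hF : IsFlagOfType s p F) (hF' : IsFlagOfType s p F')
    (hxF : ∀ i, 1 ≤ i → i ≤ s → (F i).map (x : V →ₗ[ℂ] V) ≤ F (i - 1))
    (hxF' : ∀ i, 1 ≤ i → i ≤ s → (F' i).map (x : V →ₗ[ℂ] V) ≤ F' (i - 1)) :
    ∀ i, i ≤ s → F i = F' i :=
  mainAux s n hV x hx d hd p hp hord F F' hF hF' hxF hxF'
end

section
/- Let x be a nilpotent endomorphism of an n-dimensional complex vector space V with Jordan type d, and let F be a flag of type (p_1,…,p_s) in V such that x F_i ⊆ F_{i−1} for all i. If Σ_j p_j² = Σ_i (d^i)², where d^i = #{j : d_j ≥ i} is the dual partition, then ord(p_1,…,p_s) = d. (This is the forward direction of Theorem 2.6: a polarization of x, i.e. a flag stabilizer P with x in the nilradical of Lie(P) and dim O_x = 2 dim SL(n)/P, has flag type with ord equal to the Jordan type of x; the condition x ∈ n(P) translates to x F_i ⊆ F_{i−1}, and the dimension condition dim O_x = 2 dim SL(n)/P translates to Σ_j p_j² = Σ_i (d^i)².)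 -/
open Module

namespace Stmt2Aux

lemma card_filter_le (a b : ℕ) : ((Finset.Icc 1 a).filter fun t => t ≤ b).card = min b a := by
  have h : ((Finset.Icc 1 a).filter fun t => t ≤ b) = Finset.Icc 1 (min b a) := by
    ext t; simp only [Finset.mem_filter, Finset.mem_Icc]; omega
  rw [h, Nat.card_Icc]; omega

lemma ordEntry_antitone (s : ℕ) (p : ℕ → ℕ) {i i' : ℕ} (h : i ≤ i') :
    ordEntry s p i' ≤ ordEntry s p i := by
  apply Finset.card_le_card
  intro j hj
  simp only [Finset.mem_filter] at *
  exact ⟨hj.1, le_trans h hj.2⟩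

lemma sum_ordEntry (s k : ℕ) (p : ℕ → ℕ) :
    ∑ t ∈ Finset.Icc 1 k, ordEntry s p t = ∑ j ∈ Finset.Icc 1 s, min (p j) k := by
  unfold ordEntry
  simp_rw [Finset.card_filter]
  rw [Finset.sum_comm]
  apply Finset.sum_congr rfl
  intro j _
  rw [← Finset.card_filter, card_filter_le]

lemma sq_eq_sum_odd (m : ℕ) : m ^ 2 = ∑ i ∈ Finset.Icc 1 m, (2 * i - 1) := by
  induction m with
  | zero => simp
  | succ m ih =>
    rw [Finset.sum_Icc_succ_top (by omega), ← ih]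
    have h : 2 * (m + 1) - 1 = 2 * m + 1 := by omega
    rw [h]; ring

lemma sum_sq_eq (s N : ℕ) (p : ℕ → ℕ) (hp : ∀ j ∈ Finset.Icc 1 s, p j ≤ N) :
    ∑ j ∈ Finset.Icc 1 s, (p j) ^ 2 = ∑ i ∈ Finset.Icc 1 N, (2 * i - 1) * ordEntry s p i := by
  have h1 : ∀ j ∈ Finset.Icc 1 s, (p j) ^ 2
      = ∑ i ∈ Finset.Icc 1 N, if i ≤ p j then 2 * i - 1 else 0 := by
    intro j hj
    have h2 : (Finset.Icc 1 N).filter (fun i => i ≤ p j) = Finset.Icc 1 (p j) := by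
      have := hp j hj
      ext t; simp only [Finset.mem_filter, Finset.mem_Icc]; omega
    rw [sq_eq_sum_odd, ← h2, Finset.sum_filter]
  rw [Finset.sum_congr rfl h1, Finset.sum_comm]
  apply Finset.sum_congr rfl
  intro i _
  rw [← Finset.sum_filter, Finset.sum_const, smul_eq_mul, mul_comm]
  rfl

lemma abel_id (n : ℕ) (f : ℕ → ℕ) :
    ∑ i ∈ Finset.Icc 1 n, (2 * i - 1) * f i + 2 * ∑ m ∈ Finset.Icc 1 n, ∑ i ∈ Finset.Icc 1 m, f i
      = (2 * n + 1) * ∑ i ∈ Finset.Icc 1 n, f i := by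
  have h1 : ∑ m ∈ Finset.Icc 1 n, ∑ i ∈ Finset.Icc 1 m, f i
      = ∑ i ∈ Finset.Icc 1 n, (n + 1 - i) * f i := by
    have ha : ∀ m ∈ Finset.Icc 1 n, ∑ i ∈ Finset.Icc 1 m, f i
        = ∑ i ∈ Finset.Icc 1 n, if i ≤ m then f i else 0 := by
      intro m hm
      simp only [Finset.mem_Icc] at hm
      have h2 : (Finset.Icc 1 n).filter (fun i => i ≤ m) = Finset.Icc 1 m := by
        ext t; simp only [Finset.mem_filter, Finset.mem_Icc]; omega
      rw [← h2, Finset.sum_filter]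
    rw [Finset.sum_congr rfl ha, Finset.sum_comm]
    apply Finset.sum_congr rfl
    intro i hi
    simp only [Finset.mem_Icc] at hi
    have h3 : (Finset.Icc 1 n).filter (fun m => i ≤ m) = Finset.Icc i n := by
      ext t; simp only [Finset.mem_filter, Finset.mem_Icc]; omega
    rw [← Finset.sum_filter, h3, Finset.sum_const, Nat.card_Icc, smul_eq_mul]
  rw [h1, Finset.mul_sum, ← Finset.sum_add_distrib, Finset.mul_sum]
  apply Finset.sum_congr rfl
  intro i hi
  simp only [Finset.mem_Icc] at hi
  have h4 : 2 * n + 1 = 2 * i - 1 + 2 * (n + 1 - i) := by omega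
  rw [h4, add_mul, mul_assoc]

lemma maxl (n k P : ℕ) (f : ℕ → ℕ) (hf : ∀ a b, 1 ≤ a → a ≤ b → f b ≤ f a) :
    ∑ i ∈ Finset.Icc 1 n, min (f i + if i ≤ P then 1 else 0) (k + 1) ≤
      max (∑ i ∈ Finset.Icc 1 n, min (f i) (k + 1))
        (P + ∑ i ∈ Finset.Icc 1 n, min (f i) k) := by
  by_cases hA : ∀ i ∈ Finset.Icc 1 n, i ≤ P → k + 1 ≤ f i
  · refine le_trans (le_of_eq (Finset.sum_congr rfl ?_)) (le_max_left _ _)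
    intro i hi
    by_cases h : i ≤ P
    · have := hA i hi h; simp only [h, if_true]; omega
    · simp [h]
  · push_neg at hA
    obtain ⟨i0, hi0, hi0P, hi0f⟩ := hA
    simp only [Finset.mem_Icc] at hi0
    refine le_trans ?_ (le_max_right _ _)
    have hb : ∀ i ∈ Finset.Icc 1 n,
        min (f i + if i ≤ P then 1 else 0) (k + 1) ≤ (if i ≤ P then 1 else 0) + min (f i) k := by
      intro i _
      by_cases h : i ≤ P
      · simp only [h, if_true]; omega
      · have hfi : f i ≤ k := le_trans (hf i0 i hi0.1 (by omega)) (by omega)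
        simp only [h, if_false]; omega
    refine le_trans (Finset.sum_le_sum hb) ?_
    rw [Finset.sum_add_distrib]
    have hc : ∑ i ∈ Finset.Icc 1 n, (if i ≤ P then 1 else 0) ≤ P := by
      rw [← Finset.card_filter, card_filter_le]; omega
    omega

lemma antitone_count (n k i : ℕ) (f : ℕ → ℕ)
    (hf : ∀ a b, 1 ≤ a → a ≤ b → f b ≤ f a) (hi1 : 1 ≤ i) (hin : i ≤ n) :
    k ≤ f i ↔ i ≤ ((Finset.Icc 1 n).filter fun m => k ≤ f m).card := by
  constructor
  · intro h
    have hsub : Finset.Icc 1 i ⊆ (Finset.Icc 1 n).filter fun m => k ≤ f m := by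
      intro t ht
      simp only [Finset.mem_Icc] at ht
      simp only [Finset.mem_filter, Finset.mem_Icc]
      exact ⟨⟨ht.1, le_trans ht.2 hin⟩, le_trans h (hf t i ht.1 ht.2)⟩
    calc i = (Finset.Icc 1 i).card := by rw [Nat.card_Icc]; omega
    _ ≤ _ := Finset.card_le_card hsub
  · intro h
    by_contra hc
    have hsub : (Finset.Icc 1 n).filter (fun m => k ≤ f m) ⊆ Finset.Icc 1 (i - 1) := by
      intro t ht
      simp only [Finset.mem_filter, Finset.mem_Icc] at ht
      simp only [Finset.mem_Icc]
      refine ⟨ht.1.1, ?_⟩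
      by_contra ht2
      have := hf i t hi1 (by omega)
      omega
    have := Finset.card_le_card hsub
    rw [Nat.card_Icc] at this
    omega

lemma flip (n : ℕ) (e d : ℕ → ℕ)
    (he : ∀ a b, 1 ≤ a → a ≤ b → e b ≤ e a)
    (h3 : ∀ k, ∑ i ∈ Finset.Icc 1 n, min (e i) k ≤ ∑ i ∈ Finset.Icc 1 n, min (d i) k)
    (h1 : ∑ i ∈ Finset.Icc 1 n, e i = ∑ i ∈ Finset.Icc 1 n, d i) :
    ∀ m, m ≤ n → ∑ i ∈ Finset.Icc 1 m, d i ≤ ∑ i ∈ Finset.Icc 1 m, e i := by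
  intro m hm
  rcases Nat.eq_or_lt_of_le hm with rfl | hlt
  · exact le_of_eq h1.symm
  set k := e (m + 1) with hk
  have hU : Finset.Icc 1 m ∪ Finset.Ioc m n = Finset.Icc 1 n := by
    ext t; simp only [Finset.mem_union, Finset.mem_Icc, Finset.mem_Ioc]; omega
  have hD : Disjoint (Finset.Icc 1 m) (Finset.Ioc m n) := by
    rw [Finset.disjoint_left]
    intro t ht ht'
    simp only [Finset.mem_Icc] at ht
    simp only [Finset.mem_Ioc] at ht'
    omega
  have hsplit : ∀ g : ℕ → ℕ, ∑ i ∈ Finset.Icc 1 n, g i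
      = ∑ i ∈ Finset.Icc 1 m, g i + ∑ i ∈ Finset.Ioc m n, g i := by
    intro g; rw [← hU, Finset.sum_union hD]
  have hme : ∑ i ∈ Finset.Icc 1 m, min (e i) k = m * k := by
    have hc : ∀ i ∈ Finset.Icc 1 m, min (e i) k = k := by
      intro i hi
      simp only [Finset.mem_Icc] at hi
      have : k ≤ e i := he i (m + 1) hi.1 (by omega)
      omega
    rw [Finset.sum_congr rfl hc, Finset.sum_const, Nat.card_Icc, Nat.add_sub_cancel, smul_eq_mul]
  have hBe : ∑ i ∈ Finset.Ioc m n, min (e i) k = ∑ i ∈ Finset.Ioc m n, e i := by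
    apply Finset.sum_congr rfl
    intro i hi
    simp only [Finset.mem_Ioc] at hi
    have : e i ≤ k := he (m + 1) i (by omega) (by omega)
    omega
  have hd1 : ∑ i ∈ Finset.Icc 1 m, min (d i) k ≤ m * k := by
    calc ∑ i ∈ Finset.Icc 1 m, min (d i) k ≤ ∑ _i ∈ Finset.Icc 1 m, k :=
          Finset.sum_le_sum (fun i _ => min_le_right _ _)
    _ = m * k := by rw [Finset.sum_const, Nat.card_Icc, Nat.add_sub_cancel, smul_eq_mul]
  have hd2 : ∑ i ∈ Finset.Ioc m n, min (d i) k ≤ ∑ i ∈ Finset.Ioc m n, d i :=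
    Finset.sum_le_sum (fun i _ => min_le_left _ _)
  have h3k := h3 k
  rw [hsplit (fun i => min (e i) k), hsplit (fun i => min (d i) k)] at h3k
  have h1' := h1
  rw [hsplit e, hsplit d] at h1'
  omega



lemma finrank_comap_subtype {V : Type*} [AddCommGroup V] [Module ℂ V]
    (A W : Submodule ℂ V) :
    finrank ℂ (A.comap W.subtype) = finrank ℂ ↥(A ⊓ W) := by
  calc finrank ℂ (A.comap W.subtype) = finrank ℂ ((A ⊓ W).comap W.subtype) := by
        rw [Submodule.comap_inf, Submodule.comap_subtype_self, inf_top_eq]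
  _ = finrank ℂ ↥(A ⊓ W) := (Submodule.comapSubtypeEquivOfLe inf_le_right).finrank_eq

lemma key_ineq {V : Type*} [AddCommGroup V] [Module ℂ V] [FiniteDimensional ℂ V]
    (x : Module.End ℂ V) (W W' : Submodule ℂ V) (k pj : ℕ)
    (hrk : finrank ℂ W = finrank ℂ W' + pj)
    (hmap : W.map (x : V →ₗ[ℂ] V) ≤ W') :
    pj + finrank ℂ ↥(LinearMap.ker (x ^ k) ⊓ W') ≤
      finrank ℂ ↥(LinearMap.ker (x ^ (k + 1)) ⊓ W) := by
  set Q : Submodule ℂ V := LinearMap.ker (x ^ k) ⊓ W' with hQ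
  set g : W →ₗ[ℂ] V ⧸ Q := Q.mkQ ∘ₗ (x : V →ₗ[ℂ] V) ∘ₗ W.subtype with hg
  have hker : LinearMap.ker g = (LinearMap.ker (x ^ (k + 1))).comap W.subtype := by
    ext w
    have hxw : (x : V →ₗ[ℂ] V) (w : V) ∈ W' := hmap ⟨(w : V), w.2, rfl⟩
    simp only [hg, LinearMap.mem_ker, LinearMap.coe_comp, Function.comp_apply,
      Submodule.coe_subtype, Submodule.mkQ_apply, Submodule.Quotient.mk_eq_zero,
      Submodule.mem_comap, hQ, Submodule.mem_inf]
    constructor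
    · rintro ⟨h1, _⟩
      rw [pow_succ, Module.End.mul_apply]
      exact h1
    · intro h
      refine ⟨?_, hxw⟩
      rw [pow_succ, Module.End.mul_apply] at h
      exact h
  have hrange : LinearMap.range g ≤ W'.map Q.mkQ := by
    rintro _ ⟨w, rfl⟩
    exact ⟨(x : V →ₗ[ℂ] V) (w : V), hmap ⟨(w : V), w.2, rfl⟩, rfl⟩
  have h2 : finrank ℂ ↥(W'.map Q.mkQ) + finrank ℂ ↥Q = finrank ℂ ↥W' := by
    have hrn := LinearMap.finrank_range_add_finrank_ker (Q.mkQ ∘ₗ W'.subtype)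
    rw [LinearMap.range_comp, Submodule.range_subtype, LinearMap.ker_comp,
      Submodule.ker_mkQ, finrank_comap_subtype] at hrn
    rwa [inf_eq_left.mpr (inf_le_right : Q ≤ W')] at hrn
  have h3 := LinearMap.finrank_range_add_finrank_ker g
  rw [hker, finrank_comap_subtype] at h3
  have h4 : finrank ℂ ↥(LinearMap.range g) ≤ finrank ℂ ↥(W'.map Q.mkQ) :=
    Submodule.finrank_mono hrange
  omega

end Stmt2Aux

open Stmt2Aux

/-- Forward direction of Theorem 2.6: if `x` is nilpotent of Jordan type `d`,
`F` is a flag of type `(p_1,…,p_s)` with `x F_i ⊆ F_{i−1}` for all `i`, and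
`Σ_j p_j² = Σ_i (d^i)²` (where `d^i = #{j : d_j ≥ i}` is the dual partition,
which expresses `dim O_x = 2 dim SL(n)/P`), then `ord(p_1,…,p_s) = d`. -/
theorem stmt2 {V : Type*} [AddCommGroup V] [Module ℂ V] [FiniteDimensional ℂ V]
    (n : ℕ) (hV : finrank ℂ V = n) (x : Module.End ℂ V) (hx : IsNilpotent x)
    (d : ℕ → ℕ) (hd : HasJordanType n x d)
    (s : ℕ) (p : ℕ → ℕ) (hp : ∀ j, 1 ≤ j → j ≤ s → 1 ≤ p j)
    (F : ℕ → Submodule ℂ V) (hF : IsFlagOfType s p F)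
    (hxF : ∀ i, 1 ≤ i → i ≤ s → (F i).map (x : V →ₗ[ℂ] V) ≤ F (i - 1))
    (hdim : ∑ j ∈ Finset.Icc 1 s, (p j) ^ 2 = ∑ i ∈ Finset.Icc 1 n, (ordEntry n d i) ^ 2) :
    ∀ i, 1 ≤ i → ordEntry s p i = d i := by
  obtain ⟨⟨hd_anti, hd_zero, hd_sum⟩, hd_ker⟩ := hd
  obtain ⟨hF0, hFs, hFmono, hFrank⟩ := hF
  -- flag dimensions
  have hflag : ∀ j, j ≤ s → finrank ℂ (F j) = ∑ i ∈ Finset.Icc 1 j, p i := by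
    intro j
    induction j with
    | zero => intro _; rw [hF0]; simp
    | succ j ih =>
      intro hj
      rw [Finset.sum_Icc_succ_top (by omega), ← ih (by omega)]
      have h := hFrank (j + 1) (by omega) hj
      simpa using h
  have hps : ∑ j ∈ Finset.Icc 1 s, p j = n := by
    have h := hflag s le_rfl
    rw [hFs, finrank_top, hV] at h
    omega
  have hpn : ∀ j ∈ Finset.Icc 1 s, p j ≤ n := by
    intro j hj
    rw [← hps]
    exact Finset.single_le_sum (fun _ _ => Nat.zero_le _) hj
  -- kernel dimensions
  have hker : ∀ k, finrank ℂ (LinearMap.ker (x ^ k)) = ∑ t ∈ Finset.Icc 1 k, ordEntry n d t := by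
    intro k
    induction k with
    | zero => simp [pow_zero, Module.End.one_eq_id, LinearMap.ker_id]
    | succ k ih =>
      rw [Finset.sum_Icc_succ_top (by omega), ← ih]
      have h := hd_ker (k + 1) (by omega)
      simpa using h
  -- main induction on the flag
  have hstep1 : ∀ j, j ≤ s → ∀ k,
      ∑ i ∈ Finset.Icc 1 n, min (ordEntry j p i) k ≤
        finrank ℂ ↥(LinearMap.ker (x ^ k) ⊓ F j) := by
    intro j
    induction j with
    | zero =>
      intro _ k
      have h0 : ∀ i, ordEntry 0 p i = 0 := by
        intro i; simp [ordEntry]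
      simp [h0]
    | succ j ih =>
      intro hj k
      match k with
      | 0 => simp
      | k + 1 =>
        have hrec : ∀ i, ordEntry (j + 1) p i
            = ordEntry j p i + if i ≤ p (j + 1) then 1 else 0 := by
          intro i
          unfold ordEntry
          have h1 : Finset.Icc 1 (j + 1) = insert (j + 1) (Finset.Icc 1 j) := by
            ext t; simp only [Finset.mem_Icc, Finset.mem_insert]; omega
          have h2 : (j + 1) ∉ (Finset.Icc 1 j).filter fun j' => i ≤ p j' := by
            simp only [Finset.mem_filter, Finset.mem_Icc]; omega
          rw [h1, Finset.filter_insert]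
          by_cases h : i ≤ p (j + 1)
          · rw [if_pos h, Finset.card_insert_of_notMem h2, if_pos h]
          · rw [if_neg h, if_neg h]; omega
      /- continue -/
        calc ∑ i ∈ Finset.Icc 1 n, min (ordEntry (j + 1) p i) (k + 1)
            = ∑ i ∈ Finset.Icc 1 n,
              min (ordEntry j p i + if i ≤ p (j + 1) then 1 else 0) (k + 1) := by
              exact Finset.sum_congr rfl (fun i _ => by rw [hrec i])
        _ ≤ max (∑ i ∈ Finset.Icc 1 n, min (ordEntry j p i) (k + 1))
              (p (j + 1) + ∑ i ∈ Finset.Icc 1 n, min (ordEntry j p i) k) :=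
              maxl n k (p (j + 1)) (ordEntry j p)
                (fun a b _ hab => ordEntry_antitone j p hab)
        _ ≤ finrank ℂ ↥(LinearMap.ker (x ^ (k + 1)) ⊓ F (j + 1)) := by
              apply max_le
              · refine le_trans (ih (by omega) (k + 1)) (Submodule.finrank_mono ?_)
                have hm := hFmono (j + 1) (by omega) hj
                simp only [Nat.add_sub_cancel] at hm
                exact inf_le_inf_left _ hm
              · have hk := key_ineq x (F (j + 1)) (F j) k (p (j + 1))
                  (by have h := hFrank (j + 1) (by omega) hj; simpa using h)
                  (by have h := hxF (j + 1) (by omega) hj; simpa using h)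
                exact le_trans (Nat.add_le_add_left (ih (by omega) k) _) hk
  -- majorization
  have h3 : ∀ k, ∑ i ∈ Finset.Icc 1 n, min (ordEntry s p i) k
      ≤ ∑ i ∈ Finset.Icc 1 n, min (d i) k := by
    intro k
    have h := hstep1 s le_rfl k
    rw [hFs, inf_top_eq] at h
    calc ∑ i ∈ Finset.Icc 1 n, min (ordEntry s p i) k
        ≤ finrank ℂ (LinearMap.ker (x ^ k)) := h
    _ = ∑ t ∈ Finset.Icc 1 k, ordEntry n d t := hker k
    _ = ∑ i ∈ Finset.Icc 1 n, min (d i) k := sum_ordEntry n k d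
  -- equal totals
  have h1e : ∑ i ∈ Finset.Icc 1 n, ordEntry s p i = ∑ i ∈ Finset.Icc 1 n, d i := by
    rw [hd_sum, sum_ordEntry s n p]
    have hmm : ∀ j ∈ Finset.Icc 1 s, min (p j) n = p j := fun j hj => min_eq_left (hpn j hj)
    rw [Finset.sum_congr rfl hmm, hps]
  -- bounds for d and q
  have hd1n : ∀ i, 1 ≤ i → d i ≤ n := by
    intro i hi
    by_cases hin : i ≤ n
    · have h1 : d i ≤ d 1 := hd_anti 1 i le_rfl hi
      have h2 : d 1 ≤ ∑ j ∈ Finset.Icc 1 n, d j :=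
        Finset.single_le_sum (fun _ _ => Nat.zero_le _) (Finset.mem_Icc.mpr ⟨le_rfl, by omega⟩)
      omega
    · rw [hd_zero i (by omega)]; exact Nat.zero_le _
  have hqn : ∀ t ∈ Finset.Icc 1 n, ordEntry n d t ≤ n := by
    intro t _
    calc ordEntry n d t ≤ (Finset.Icc 1 n).card := Finset.card_filter_le _ _
    _ = n := by rw [Nat.card_Icc]; omega
  -- double dual
  have hDD : ∀ i ∈ Finset.Icc 1 n, ordEntry n (ordEntry n d) i = d i := by
    intro i hi
    simp only [Finset.mem_Icc] at hi
    have h1 : ∀ t, (i ≤ ordEntry n d t ↔ t ≤ d i) := by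
      intro t
      exact (antitone_count n t i d hd_anti hi.1 hi.2).symm
    have h2 : ((Finset.Icc 1 n).filter fun t => i ≤ ordEntry n d t)
        = ((Finset.Icc 1 n).filter fun t => t ≤ d i) :=
      Finset.filter_congr (fun t _ => by simp only [h1 t])
    show ((Finset.Icc 1 n).filter fun t => i ≤ ordEntry n d t).card = d i
    rw [h2, card_filter_le]
    exact min_eq_left (hd1n i hi.1)
  -- weighted sums equal
  have h2w : ∑ i ∈ Finset.Icc 1 n, (2 * i - 1) * ordEntry s p i
      = ∑ i ∈ Finset.Icc 1 n, (2 * i - 1) * d i := by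
    rw [← sum_sq_eq s n p hpn, hdim, sum_sq_eq n n (ordEntry n d) hqn]
    exact Finset.sum_congr rfl (fun i hi => by rw [hDD i hi])
  -- flip to prefix sums
  have h4 := flip n (ordEntry s p) d (fun a b _ hab => ordEntry_antitone s p hab) h3 h1e
  -- prefix sums are equal
  have hEq : ∑ m ∈ Finset.Icc 1 n, ∑ i ∈ Finset.Icc 1 m, ordEntry s p i
      = ∑ m ∈ Finset.Icc 1 n, ∑ i ∈ Finset.Icc 1 m, d i := by
    have a1 := abel_id n (ordEntry s p)
    have a2 := abel_id n d
    rw [h1e, h2w] at a1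
    omega
  have hptw : ∀ m ∈ Finset.Icc 1 n, ∑ i ∈ Finset.Icc 1 m, ordEntry s p i
      = ∑ i ∈ Finset.Icc 1 m, d i := by
    by_contra hc
    push_neg at hc
    obtain ⟨m, hm, hne⟩ := hc
    have hmn : m ≤ n := by simp only [Finset.mem_Icc] at hm; omega
    have hlt : ∑ i ∈ Finset.Icc 1 m, d i < ∑ i ∈ Finset.Icc 1 m, ordEntry s p i :=
      lt_of_le_of_ne (h4 m hmn) (fun h => hne h.symm)
    have hsum := Finset.sum_lt_sum
      (fun m' hm' => h4 m' (by simp only [Finset.mem_Icc] at hm'; omega))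
      ⟨m, hm, hlt⟩
    omega
  -- conclude
  intro i hi1
  by_cases hin : i ≤ n
  · obtain ⟨i', rfl⟩ : ∃ i', i = i' + 1 := ⟨i - 1, by omega⟩
    have E := hptw (i' + 1) (Finset.mem_Icc.mpr ⟨by omega, hin⟩)
    have E' : ∑ i'' ∈ Finset.Icc 1 i', ordEntry s p i'' = ∑ i'' ∈ Finset.Icc 1 i', d i'' := by
      rcases Nat.eq_zero_or_pos i' with h0 | hpos
      · rw [h0]; simp
      · exact hptw i' (Finset.mem_Icc.mpr ⟨by omega, by omega⟩)
    rw [Finset.sum_Icc_succ_top (by omega), Finset.sum_Icc_succ_top (by omega)] at E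
    omega
  · rw [hd_zero i (by omega)]
    unfold ordEntry
    rw [Finset.card_eq_zero, Finset.filter_eq_empty_iff]
    intro j hj
    have := hpn j hj
    omega
end

section
/- Let x be a nilpotent endomorphism of an n-dimensional complex vector space V with Jordan type d = [d_1,…,d_k], and let 1 ≤ p ≤ k. Then there exists a p-dimensional subspace W ⊆ ker(x) such that the endomorphism of V/W induced by x is nilpotent with Jordan type equal to the partition obtained by rearranging the multiset {d_1−1,…,d_p−1, d_{p+1},…,d_k} in weakly decreasing order and deleting zero entries. (Key step in the proof of Theorem 2.6.) -/
open Module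

namespace Stmt3Aux

def conj (n : ℕ) (e : ℕ → ℕ) (j : ℕ) : ℕ :=
  ((Finset.Icc 1 n).filter fun i => j ≤ e i).card

lemma conj_le (n : ℕ) (e : ℕ → ℕ) (j : ℕ) : conj n e j ≤ n := by
  refine le_trans (Finset.card_filter_le _ _) ?_
  simp [Nat.card_Icc]

lemma conj_anti (n : ℕ) (e : ℕ → ℕ) {j j' : ℕ} (h : j ≤ j') : conj n e j' ≤ conj n e j := by
  apply Finset.card_le_card
  intro a ha
  simp only [Finset.mem_filter] at ha ⊢
  exact ⟨ha.1, le_trans h ha.2⟩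

lemma dual {n : ℕ} {e : ℕ → ℕ} (hmono : ∀ i j, 1 ≤ i → i ≤ j → e j ≤ e i)
    (hvan : ∀ i, n < i → e i = 0) {i j : ℕ} (hi : 1 ≤ i) (hj : 1 ≤ j) :
    j ≤ e i ↔ i ≤ conj n e j := by
  constructor
  · intro h
    have hin : i ≤ n := by
      by_contra hc
      rw [hvan i (by omega)] at h; omega
    have hsub : Finset.Icc 1 i ⊆ (Finset.Icc 1 n).filter fun i' => j ≤ e i' := by
      intro a ha
      simp only [Finset.mem_Icc] at ha
      simp only [Finset.mem_filter, Finset.mem_Icc]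
      exact ⟨⟨ha.1, le_trans ha.2 hin⟩, le_trans h (hmono a i ha.1 ha.2)⟩
    have := Finset.card_le_card hsub
    simpa [conj, Nat.card_Icc] using this
  · intro h
    by_contra hc
    push_neg at hc
    have hsub : ((Finset.Icc 1 n).filter fun i' => j ≤ e i') ⊆ Finset.Icc 1 (i - 1) := by
      intro a ha
      simp only [Finset.mem_filter, Finset.mem_Icc] at ha
      simp only [Finset.mem_Icc]
      refine ⟨ha.1.1, ?_⟩
      by_contra hai
      have : e a ≤ e i := hmono i a hi (by omega)
      omega
    have := Finset.card_le_card hsub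
    unfold conj at h
    simp only [Nat.card_Icc] at this
    omega

lemma sum_shift (f : ℕ → ℕ) (n : ℕ) :
    ∑ i ∈ Finset.Icc 1 n, f (i + 1) + f 1 = ∑ i ∈ Finset.Icc 1 n, f i + f (n + 1) := by
  induction n with
  | zero => simp
  | succ n ih =>
    rw [Finset.sum_Icc_succ_top (by omega), Finset.sum_Icc_succ_top (by omega : 1 ≤ n + 1)]
    omega

lemma sum_conj (n : ℕ) (e : ℕ → ℕ) (M : ℕ) :
    ∑ j ∈ Finset.Icc 1 M, conj n e j = ∑ i ∈ Finset.Icc 1 n, min (e i) M := by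
  unfold conj
  simp_rw [Finset.card_filter]
  rw [Finset.sum_comm]
  refine Finset.sum_congr rfl fun i _ => ?_
  have h : ((Finset.Icc 1 M).filter fun j => j ≤ e i) = Finset.Icc 1 (min (e i) M) := by
    ext a
    simp only [Finset.mem_filter, Finset.mem_Icc]
    omega
  calc (∑ j ∈ Finset.Icc 1 M, if j ≤ e i then 1 else 0)
      = ((Finset.Icc 1 M).filter fun j => j ≤ e i).card := (Finset.card_filter _ _).symm
    _ = min (e i) M := by rw [h, Nat.card_Icc]; omega

variable {V V₂ : Type*} [AddCommGroup V] [Module ℂ V] [FiniteDimensional ℂ V]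
  [AddCommGroup V₂] [Module ℂ V₂]

lemma finrank_map_add_inf_ker (f : V →ₗ[ℂ] V₂) (A : Submodule ℂ V) :
    finrank ℂ (A.map f) + finrank ℂ (A ⊓ LinearMap.ker f : Submodule ℂ V) = finrank ℂ A := by
  have h := LinearMap.finrank_range_add_finrank_ker (f.domRestrict A)
  rw [LinearMap.range_domRestrict, LinearMap.ker_domRestrict] at h
  rwa [← Submodule.finrank_map_subtype_eq A (Submodule.comap A.subtype (LinearMap.ker f)),
    Submodule.map_comap_subtype] at h

omit [FiniteDimensional ℂ V] in
lemma ker_mapQ (W : Submodule ℂ V) (g : V →ₗ[ℂ] V) (hg : W ≤ W.comap g) :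
    LinearMap.ker (W.mapQ W g hg) = (W.comap g).map W.mkQ := by
  ext xq
  obtain ⟨v, rfl⟩ := W.mkQ_surjective xq
  simp only [LinearMap.mem_ker, Submodule.mapQ_apply, Submodule.mkQ_apply,
    Submodule.Quotient.mk_eq_zero, Submodule.mem_map, Submodule.mem_comap]
  constructor
  · intro h
    exact ⟨v, h, rfl⟩
  · rintro ⟨u, hu, huv⟩
    rw [Submodule.Quotient.eq] at huv
    have h1 : g (u - v) ∈ W := hg huv
    rw [map_sub] at h1
    have h2 := W.sub_mem hu h1
    simpa using h2

lemma exists_between (A B : Submodule ℂ V) (hAB : A ≤ B) (p : ℕ)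
    (h1 : finrank ℂ A ≤ p) (h2 : p ≤ finrank ℂ B) :
    ∃ W : Submodule ℂ V, A ≤ W ∧ W ≤ B ∧ finrank ℂ W = p := by
  obtain ⟨q, hq⟩ : ∃ q, p - finrank ℂ A = q := ⟨_, rfl⟩
  induction q generalizing A with
  | zero => exact ⟨A, le_rfl, hAB, by omega⟩
  | succ q ih =>
    have hlt : finrank ℂ A < p := by omega
    have hABlt : A < B := lt_of_le_of_ne hAB (by rintro rfl; omega)
    obtain ⟨b, hbB, hbA⟩ := SetLike.exists_of_lt hABlt
    have hb0 : b ≠ 0 := by rintro rfl; exact hbA A.zero_mem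
    have hspan : finrank ℂ (Submodule.span ℂ {b}) = 1 := finrank_span_singleton hb0
    have hle : A ≤ A ⊔ Submodule.span ℂ {b} := le_sup_left
    have hlt' : A < A ⊔ Submodule.span ℂ {b} := lt_of_le_of_ne hle (by
      intro h
      exact hbA (h ▸ Submodule.mem_sup_right (Submodule.mem_span_singleton_self b)))
    have hrk_le : finrank ℂ (A ⊔ Submodule.span ℂ {b} : Submodule ℂ V) +
        finrank ℂ (A ⊓ Submodule.span ℂ {b} : Submodule ℂ V) = finrank ℂ A + 1 := by
      rw [← hspan]; exact Submodule.finrank_sup_add_finrank_inf_eq A _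
    have hgt : finrank ℂ A < finrank ℂ (A ⊔ Submodule.span ℂ {b} : Submodule ℂ V) :=
      Submodule.finrank_lt_finrank_of_lt hlt'
    have hA'B : A ⊔ Submodule.span ℂ {b} ≤ B :=
      sup_le hAB ((Submodule.span_singleton_le_iff_mem b B).mpr hbB)
    obtain ⟨W, hW1, hW2, hW3⟩ := ih (A ⊔ Submodule.span ℂ {b}) hA'B (by omega) (by omega)
    exact ⟨W, le_trans hle hW1, hW2, hW3⟩

end Stmt3Aux

/-- Key step in the proof of Theorem 2.6: if `x` is nilpotent of Jordan type
`d = [d_1,…,d_k]` and `1 ≤ p ≤ k` (i.e. `d_p ≥ 1`), then there is a `p`-dimensional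
subspace `W ⊆ ker x` such that the endomorphism induced by `x` on `V/W` is nilpotent
with Jordan type the weakly decreasing rearrangement of the multiset
`{d_1−1,…,d_p−1, d_{p+1},…,d_k}` with zero entries deleted (expressed below by
counting the multiplicity of every part `m ≥ 1`). -/
theorem stmt3 {V : Type*} [AddCommGroup V] [Module ℂ V] [FiniteDimensional ℂ V]
    (n : ℕ) (hV : finrank ℂ V = n) (x : Module.End ℂ V) (hx : IsNilpotent x)
    (d : ℕ → ℕ) (hd : HasJordanType n x d)
    (p : ℕ) (hp1 : 1 ≤ p) (hpk : 1 ≤ d p) :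
    ∃ (W : Submodule ℂ V) (hW : W ≤ W.comap (x : V →ₗ[ℂ] V)),
      W ≤ LinearMap.ker x ∧ finrank ℂ W = p ∧
      ∃ d' : ℕ → ℕ,
        IsNilpotent (Submodule.mapQ W W (x : V →ₗ[ℂ] V) hW) ∧
        HasJordanType (n - p) (Submodule.mapQ W W (x : V →ₗ[ℂ] V) hW) d' ∧
        ∀ m, 1 ≤ m →
          ((Finset.Icc 1 (n - p)).filter fun j => d' j = m).card =
            ((Finset.Icc 1 p).filter fun j => d j = m + 1).card +
            ((Finset.Icc (p + 1) n).filter fun j => d j = m).card := by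
  classical
  obtain ⟨⟨hdmono, hdvan, hdsum⟩, hdim⟩ := hd
  set C : ℕ → ℕ := Stmt3Aux.conj n d with hCdef
  have hdual : ∀ i j, 1 ≤ i → 1 ≤ j → (i ≤ d j ↔ j ≤ C i) := by
    intro i j hi hj
    exact Stmt3Aux.dual hdmono hdvan hj hi
  have hCle : ∀ i, C i ≤ n := fun i => Stmt3Aux.conj_le n d i
  have hCanti : ∀ {i j : ℕ}, i ≤ j → C j ≤ C i := fun h => Stmt3Aux.conj_anti n d h
  have hdle : ∀ j, j ∈ Finset.Icc 1 n → d j ≤ n := by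
    intro j hj
    calc d j ≤ ∑ j ∈ Finset.Icc 1 n, d j :=
          Finset.single_le_sum (fun _ _ => Nat.zero_le _) hj
      _ = n := hdsum
  have hCvan : ∀ i, n < i → C i = 0 := by
    intro i hi
    rw [hCdef]
    unfold Stmt3Aux.conj
    rw [Finset.card_eq_zero, Finset.filter_eq_empty_iff]
    intro j hj
    have := hdle j hj
    omega
  have hpC1 : p ≤ C 1 := (hdual 1 p le_rfl hp1).mp hpk
  have hpn : p ≤ n := le_trans hpC1 (hCle 1)
  have hn1 : 1 ≤ n := le_trans hp1 hpn
  set c' : ℕ → ℕ := fun i => min p (C (i + 1)) + (C i - min p (C i)) with hc'def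
  have hc'key : ∀ i, c' i + min p (C i) = C i + min p (C (i + 1)) := by
    intro i; simp only [hc'def]; omega
  have hc'anti : ∀ {i j : ℕ}, i ≤ j → c' j ≤ c' i := by
    intro i j h
    have h1 : C j ≤ C i := hCanti h
    have h2 : C (j + 1) ≤ C (i + 1) := hCanti (by omega)
    simp only [hc'def]; omega
  have hc'van : ∀ i, n < i → c' i = 0 := by
    intro i hi
    simp only [hc'def]
    rw [hCvan i hi, hCvan (i + 1) (by omega)]
    simp
  have hsumC : ∑ i ∈ Finset.Icc 1 n, C i = n := by
    have h := Stmt3Aux.sum_conj n d n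
    have h2 : ∑ i ∈ Finset.Icc 1 n, min (d i) n = n := by
      rw [Finset.sum_congr rfl (fun i hi => min_eq_left (hdle i hi))]
      exact hdsum
    rw [hCdef]
    calc ∑ i ∈ Finset.Icc 1 n, Stmt3Aux.conj n d i = ∑ i ∈ Finset.Icc 1 n, min (d i) n := h
      _ = n := h2
  have hsumc' : ∑ i ∈ Finset.Icc 1 n, c' i = n - p := by
    have h1 : ∑ i ∈ Finset.Icc 1 n, c' i + ∑ i ∈ Finset.Icc 1 n, min p (C i) =
        ∑ i ∈ Finset.Icc 1 n, C i + ∑ i ∈ Finset.Icc 1 n, min p (C (i + 1)) := by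
      rw [← Finset.sum_add_distrib, ← Finset.sum_add_distrib]
      exact Finset.sum_congr rfl fun i _ => hc'key i
    have h2 : ∑ i ∈ Finset.Icc 1 n, min p (C (i + 1)) + min p (C 1) =
        ∑ i ∈ Finset.Icc 1 n, min p (C i) + min p (C (n + 1)) :=
      Stmt3Aux.sum_shift (fun i => min p (C i)) n
    rw [hsumC] at h1
    rw [hCvan (n + 1) (by omega)] at h2
    omega
  have hc'le : ∀ i, 1 ≤ i → c' i ≤ n - p := by
    intro i hi
    have h1 : c' i ≤ c' 1 := hc'anti hi
    have h2 : c' 1 ≤ ∑ i ∈ Finset.Icc 1 n, c' i :=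
      Finset.single_le_sum (fun _ _ => Nat.zero_le _) (by simp [Finset.mem_Icc]; omega)
    omega
  set d' : ℕ → ℕ := fun j => Stmt3Aux.conj n c' j with hd'def
  have hdual' : ∀ i j, 1 ≤ i → 1 ≤ j → (j ≤ c' i ↔ i ≤ d' j) := by
    intro i j hi hj
    exact Stmt3Aux.dual (fun a b _ hab => hc'anti hab) hc'van hi hj
  have hd'mono : ∀ i j, 1 ≤ i → i ≤ j → d' j ≤ d' i := by
    intro i j _ hij
    exact Stmt3Aux.conj_anti n c' hij
  have hd'van : ∀ j, n - p < j → d' j = 0 := by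
    intro j hj
    rw [hd'def]
    unfold Stmt3Aux.conj
    rw [Finset.card_eq_zero, Finset.filter_eq_empty_iff]
    intro i hi
    simp only [Finset.mem_Icc] at hi
    have := hc'le i hi.1
    omega
  have hordd' : ∀ i, 1 ≤ i → ordEntry (n - p) d' i = c' i := by
    intro i hi
    unfold ordEntry
    have h : ((Finset.Icc 1 (n - p)).filter fun j => i ≤ d' j) = Finset.Icc 1 (c' i) := by
      ext j
      simp only [Finset.mem_filter, Finset.mem_Icc]
      constructor
      · rintro ⟨⟨hj1, hj2⟩, hij⟩
        exact ⟨hj1, (hdual' i j hi hj1).mpr hij⟩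
      · rintro ⟨hj1, hj2⟩
        have hle := hc'le i hi
        exact ⟨⟨hj1, by omega⟩, (hdual' i j hi hj1).mp hj2⟩
    rw [h, Nat.card_Icc]
    omega
  have hd'sum : ∑ j ∈ Finset.Icc 1 (n - p), d' j = n - p := by
    have h1 : ∑ j ∈ Finset.Icc 1 (n - p), d' j =
        ∑ i ∈ Finset.Icc 1 n, min (c' i) (n - p) := by
      rw [hd'def]; exact Stmt3Aux.sum_conj n c' (n - p)
    rw [h1, Finset.sum_congr rfl (fun i hi => min_eq_left
      (hc'le i (by simp [Finset.mem_Icc] at hi; omega)))]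
    exact hsumc'
  -- linear algebra
  have hkerle : ∀ i : ℕ, LinearMap.ker (x ^ i) ≤ LinearMap.ker (x ^ (i + 1)) := by
    intro i v hv
    simp only [LinearMap.mem_ker] at hv ⊢
    rw [pow_succ', Module.End.mul_apply, hv, map_zero]
  have hrangele : ∀ {a b : ℕ}, a ≤ b → LinearMap.range (x ^ b) ≤ LinearMap.range (x ^ a) := by
    intro a b hab
    rintro _ ⟨u, rfl⟩
    refine ⟨(x ^ (b - a)) u, ?_⟩
    rw [← Module.End.mul_apply, ← pow_add]
    congr 2
    omega
  have hord : ∀ i, ordEntry n d i = C i := by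
    intro i; rw [hCdef]; rfl
  have hUrank : ∀ i : ℕ,
      finrank ℂ (LinearMap.ker x ⊓ LinearMap.range (x ^ i) : Submodule ℂ V) = C (i + 1) := by
    intro i
    have hmap : (LinearMap.ker (x ^ (i + 1))).map (x ^ i : V →ₗ[ℂ] V) =
        LinearMap.ker x ⊓ LinearMap.range (x ^ i) := by
      ext w
      simp only [Submodule.mem_map, LinearMap.mem_ker, Submodule.mem_inf, LinearMap.mem_range]
      constructor
      · rintro ⟨u, hu, rfl⟩
        refine ⟨?_, u, rfl⟩
        rw [← Module.End.mul_apply, ← pow_succ']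
        exact hu
      · rintro ⟨hw, u, rfl⟩
        refine ⟨u, ?_, rfl⟩
        rw [pow_succ', Module.End.mul_apply]
        exact hw
    have h1 := Stmt3Aux.finrank_map_add_inf_ker (x ^ i : V →ₗ[ℂ] V) (LinearMap.ker (x ^ (i + 1)))
    rw [hmap] at h1
    have h2 : (LinearMap.ker (x ^ (i + 1)) ⊓ LinearMap.ker (x ^ i) : Submodule ℂ V) =
        LinearMap.ker (x ^ i) := inf_eq_right.mpr (hkerle i)
    rw [h2] at h1
    have h3 := hdim (i + 1) (by omega)
    rw [hord] at h3
    have h3' : i + 1 - 1 = i := by omega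
    rw [h3'] at h3
    omega
  set t := Nat.findGreatest (fun i => p ≤ C (i + 1)) n with htdef
  have ht1 : p ≤ C (t + 1) :=
    Nat.findGreatest_spec (P := fun i => p ≤ C (i + 1)) (Nat.zero_le n) hpC1
  have ht2 : C (t + 2) < p := by
    rcases Nat.lt_or_ge t n with h | h
    · have hng := Nat.findGreatest_is_greatest (P := fun i => p ≤ C (i + 1)) (n := n)
        (k := t + 1) (by omega) (by omega)
      have hng2 : ¬ p ≤ C (t + 2) := by simpa [show t + 1 + 1 = t + 2 by omega] using hng
      omega
    · have htn : t ≤ n := Nat.findGreatest_le n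
      have heq : t = n := le_antisymm htn h
      rw [heq]
      have := hCvan (n + 2) (by omega)
      omega
  obtain ⟨W, hAW, hWB, hWrank⟩ := Stmt3Aux.exists_between
    (LinearMap.ker x ⊓ LinearMap.range (x ^ (t + 1)))
    (LinearMap.ker x ⊓ LinearMap.range (x ^ t))
    (inf_le_inf_left _ (hrangele (Nat.le_succ t))) p
    (by rw [hUrank (t + 1), show t + 1 + 1 = t + 2 by omega]; omega) (by rw [hUrank t]; omega)
  have hWker : W ≤ LinearMap.ker x := le_trans hWB inf_le_left
  have hW : W ≤ W.comap (x : V →ₗ[ℂ] V) := by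
    intro w hw
    have hxw : x w = 0 := hWker hw
    simp only [Submodule.mem_comap]
    rw [hxw]
    exact W.zero_mem
  have hwinter : ∀ i : ℕ,
      finrank ℂ (W ⊓ LinearMap.range (x ^ i) : Submodule ℂ V) = min p (C (i + 1)) := by
    intro i
    rcases le_or_gt i t with h | h
    · have hWr : W ≤ LinearMap.range (x ^ i) :=
        le_trans hWB (le_trans inf_le_right (hrangele h))
      rw [inf_eq_left.mpr hWr, hWrank]
      have : p ≤ C (i + 1) := le_trans ht1 (hCanti (by omega))
      omega
    · have hsub : (LinearMap.ker x ⊓ LinearMap.range (x ^ i) : Submodule ℂ V) ≤ W :=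
        le_trans (inf_le_inf_left _ (hrangele (by omega : t + 1 ≤ i))) hAW
      have heq : (W ⊓ LinearMap.range (x ^ i) : Submodule ℂ V) =
          LinearMap.ker x ⊓ LinearMap.range (x ^ i) := by
        apply le_antisymm
        · exact inf_le_inf_right _ hWker
        · exact le_inf hsub inf_le_right
      rw [heq, hUrank i]
      have : C (i + 1) ≤ C (t + 2) := hCanti (by omega)
      omega
  have hq : ∀ i : ℕ,
      finrank ℂ (LinearMap.ker ((Submodule.mapQ W W (x : V →ₗ[ℂ] V) hW) ^ i)) + p =
        min p (C (i + 1)) + finrank ℂ (LinearMap.ker (x ^ i)) := by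
    intro i
    have hWi : W ≤ W.comap ((x : V →ₗ[ℂ] V) ^ i) := W.le_comap_pow_of_le_comap hW i
    have hpow : (Submodule.mapQ W W (x : V →ₗ[ℂ] V) hW) ^ i =
        Submodule.mapQ W W ((x : V →ₗ[ℂ] V) ^ i) hWi := (Submodule.mapQ_pow W hW i hWi).symm
    rw [hpow, Stmt3Aux.ker_mapQ W _ hWi]
    have h1 := Stmt3Aux.finrank_map_add_inf_ker W.mkQ (W.comap ((x : V →ₗ[ℂ] V) ^ i))
    rw [Submodule.ker_mkQ] at h1
    have h2 : (W.comap ((x : V →ₗ[ℂ] V) ^ i) ⊓ W) = W := inf_eq_right.mpr hWi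
    rw [h2, hWrank] at h1
    have h3 := Stmt3Aux.finrank_map_add_inf_ker ((x : V →ₗ[ℂ] V) ^ i)
      (W.comap ((x : V →ₗ[ℂ] V) ^ i))
    rw [Submodule.map_comap_eq] at h3
    have h4 : (W.comap ((x : V →ₗ[ℂ] V) ^ i) ⊓ LinearMap.ker ((x : V →ₗ[ℂ] V) ^ i)) =
        LinearMap.ker ((x : V →ₗ[ℂ] V) ^ i) := by
      apply inf_eq_right.mpr
      intro v hv
      simp only [Submodule.mem_comap]
      rw [LinearMap.mem_ker.mp hv]
      exact W.zero_mem
    rw [h4] at h3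
    have h5 : finrank ℂ (LinearMap.range ((x : V →ₗ[ℂ] V) ^ i) ⊓ W : Submodule ℂ V) =
        min p (C (i + 1)) := by
      rw [inf_comm]
      exact hwinter i
    rw [h5] at h3
    omega
  refine ⟨W, hW, hWker, hWrank, d', ?_, ?_, ?_⟩
  · obtain ⟨N, hN⟩ := hx
    refine ⟨N, ?_⟩
    have hWN : W ≤ W.comap ((x : V →ₗ[ℂ] V) ^ N) := W.le_comap_pow_of_le_comap hW N
    rw [← Submodule.mapQ_pow W hW N hWN]
    have hgen : ∀ (g : V →ₗ[ℂ] V) (hg : W ≤ W.comap g), g = 0 → W.mapQ W g hg = 0 := by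
      rintro g hg rfl
      exact Submodule.mapQ_zero W W
    exact hgen _ hWN hN
  · refine ⟨⟨hd'mono, hd'van, hd'sum⟩, ?_⟩
    intro i hi
    rw [hordd' i hi]
    have h1 := hq i
    have h2 := hq (i - 1)
    have heq : i - 1 + 1 = i := by omega
    rw [heq] at h2
    have h3 := hdim i hi
    rw [hord] at h3
    have h4 := hc'key i
    omega
  · intro m hm
    have e1 : ((Finset.Icc 1 (n - p)).filter fun j => d' j = m) =
        Finset.Icc (c' (m + 1) + 1) (c' m) := by
      ext j
      simp only [Finset.mem_filter, Finset.mem_Icc]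
      constructor
      · rintro ⟨⟨hj1, hj2⟩, hdj⟩
        have hu := (hdual' m j hm hj1).mpr (by omega)
        have h3 : ¬ (j ≤ c' (m + 1)) := fun hc => by
          have := (hdual' (m + 1) j (by omega) hj1).mp hc
          omega
        omega
      · rintro ⟨hj1, hj2⟩
        have hj0 : 1 ≤ j := by omega
        have h1 : m ≤ d' j := (hdual' m j hm hj0).mp hj2
        have h2 : ¬ (m + 1 ≤ d' j) := fun h => by
          have := (hdual' (m + 1) j (by omega) hj0).mpr h
          omega
        have h3 := hc'le m hm
        exact ⟨⟨hj0, by omega⟩, by omega⟩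
    have e2 : ((Finset.Icc 1 p).filter fun j => d j = m + 1) =
        Finset.Icc (C (m + 2) + 1) (min p (C (m + 1))) := by
      ext j
      simp only [Finset.mem_filter, Finset.mem_Icc]
      constructor
      · rintro ⟨⟨hj1, hj2⟩, hdj⟩
        have h1 := (hdual (m + 1) j (by omega) hj1).mp (by omega)
        have h2 : ¬ (j ≤ C (m + 2)) := fun hc => by
          have := (hdual (m + 2) j (by omega) hj1).mpr hc
          omega
        omega
      · rintro ⟨hj1, hj2⟩
        have hj0 : 1 ≤ j := by omega
        have h1 : m + 1 ≤ d j := (hdual (m + 1) j (by omega) hj0).mpr (by omega)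
        have h2 : ¬ (m + 2 ≤ d j) := fun h => by
          have := (hdual (m + 2) j (by omega) hj0).mp h
          omega
        exact ⟨⟨hj0, by omega⟩, by omega⟩
    have e3 : ((Finset.Icc (p + 1) n).filter fun j => d j = m) =
        Finset.Icc (max (p + 1) (C (m + 1) + 1)) (C m) := by
      ext j
      simp only [Finset.mem_filter, Finset.mem_Icc]
      constructor
      · rintro ⟨⟨hj1, hj2⟩, hdj⟩
        have hj0 : 1 ≤ j := by omega
        have h1 := (hdual m j hm hj0).mp (by omega)
        have h2 : ¬ (j ≤ C (m + 1)) := fun hc => by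
          have := (hdual (m + 1) j (by omega) hj0).mpr hc
          omega
        omega
      · rintro ⟨hj1, hj2⟩
        have hj0 : 1 ≤ j := by omega
        have h1 : m ≤ d j := (hdual m j hm hj0).mpr hj2
        have h2 : ¬ (m + 1 ≤ d j) := fun h => by
          have := (hdual (m + 1) j (by omega) hj0).mp h
          omega
        have h3 := hCle m
        exact ⟨⟨by omega, by omega⟩, by omega⟩
    rw [e1, e2, e3, Nat.card_Icc, Nat.card_Icc, Nat.card_Icc]
    have k1 := hc'key m
    have k2 := hc'key (m + 1)
    rw [show m + 1 + 1 = m + 2 by omega] at k2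
    have a1 : C (m + 2) ≤ C (m + 1) := hCanti (by omega)
    have a2 : C (m + 1) ≤ C m := hCanti (by omega)
    have a3 : c' (m + 1) ≤ c' m := hc'anti (by omega)
    omega
end

section
/- Let x be a nilpotent endomorphism of an n-dimensional complex vector space V with Jordan type d, let (p_1,…,p_s) be a sequence of positive integers with ord(p_1,…,p_s) = d, and let F be a flag of type (p_1,…,p_s) in V with x F_i ⊆ F_{i−1} for all i. Let 2 ≤ j ≤ s be an index with p_{j−1} ≠ p_j, let x̄ be the endomorphism of F_j/F_{j−2} induced by x, and let φ : F_j → F_j/F_{j−2} be the projection. Define F'_{j−1} := φ^{−1}(ker x̄) if p_{j−1} < p_j, and F'_{j−1} := φ^{−1}(im x̄) if p_{j−1} > p_j, and set F'_i := F_i for i ≠ j−1. Then F' is a flag of type (p_1,…,p_{j−2}, p_j, p_{j−1}, p_{j+1},…,p_s) (i.e. dim(F'_{j−1}/F_{j−2}) = p_j and dim(F_j/F'_{j−1}) = p_{j−1}) and x F'_i ⊆ F'_{i−1} for all i. (Lemma 4.1.) -/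
open Module

lemma auxGL {V W : Type*} [AddCommGroup V] [Module ℂ V] [FiniteDimensional ℂ V]
    [AddCommGroup W] [Module ℂ W] (f : V →ₗ[ℂ] W) (S : Submodule ℂ V) :
    finrank ℂ (S.map f) + finrank ℂ (LinearMap.ker f ⊓ S : Submodule ℂ V) = finrank ℂ S := by
  have h := LinearMap.finrank_range_add_finrank_ker (f ∘ₗ S.subtype)
  rw [LinearMap.range_comp, Submodule.range_subtype, LinearMap.ker_comp] at h
  have e1 : Submodule.comap S.subtype (LinearMap.ker f)
      = Submodule.comap S.subtype (LinearMap.ker f ⊓ S) := by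
    ext v
    simp only [Submodule.mem_comap, Submodule.mem_inf, Submodule.coe_subtype]
    exact ⟨fun h => ⟨h, v.2⟩, fun h => h.1⟩
  have e2 : finrank ℂ (Submodule.comap S.subtype (LinearMap.ker f ⊓ S))
      = finrank ℂ (LinearMap.ker f ⊓ S : Submodule ℂ V) :=
    (Submodule.comapSubtypeEquivOfLe inf_le_right).finrank_eq
  rw [e1, e2] at h
  exact h

lemma auxReindex {β : Type*} [AddCommMonoid β] (f : ℕ → β) (M : ℕ) :
    ∑ t ∈ Finset.Icc 1 M, f t = ∑ t ∈ Finset.range M, f (t + 1) := by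
  induction M with
  | zero => simp
  | succ m ih =>
    rw [Finset.sum_Icc_succ_top (by omega) f, Finset.sum_range_succ, ih]

/-- Double counting. -/

lemma auxDC (f : ℕ → ℕ) (L T : ℕ) :
    ∑ t ∈ Finset.Icc 1 T, ((Finset.Icc 1 L).filter fun l => t ≤ f l).card
      = ∑ l ∈ Finset.Icc 1 L, min (f l) T := by
  have h1 : ∀ t, ((Finset.Icc 1 L).filter fun l => t ≤ f l).card
      = ∑ l ∈ Finset.Icc 1 L, if t ≤ f l then 1 else 0 := fun t => Finset.card_filter _ _
  simp only [h1]
  rw [Finset.sum_comm]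
  refine Finset.sum_congr rfl fun l _ => ?_
  have h2 : ((Finset.Icc 1 T).filter fun t => t ≤ f l) = Finset.Icc 1 (min (f l) T) := by
    ext t; simp only [Finset.mem_filter, Finset.mem_Icc]; omega
  rw [← Finset.card_filter, h2, Nat.card_Icc]
  omega

lemma auxNC {V : Type*} [AddCommGroup V] [Module ℂ V] [FiniteDimensional ℂ V]
    (x : Module.End ℂ V) (M : ℕ) (hM : x ^ M = 0)
    (k : ℕ) (s : ℕ) (G : ℕ → Submodule ℂ V) (q : ℕ → ℕ)
    (hG0 : G 0 = ⊥)
    (hmono : ∀ i, 1 ≤ i → i ≤ s → G (i - 1) ≤ G i)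
    (hxG : ∀ i, 1 ≤ i → i ≤ s → (G i).map (x : V →ₗ[ℂ] V) ≤ G (i - 1))
    (hq : ∀ i, 1 ≤ i → i ≤ s → finrank ℂ (G i) = finrank ℂ (G (i - 1)) + q i) :
    ∑ t ∈ Finset.range M,
        min (finrank ℂ ((LinearMap.ker (x ^ (t + 1)) ⊓ G s).map
          ((x ^ t : Module.End ℂ V) : V →ₗ[ℂ] V))) k
      ≤ ∑ i ∈ Finset.Icc 1 s, min (q i) k := by
  have hker : ∀ t : ℕ, LinearMap.ker (x ^ t) ≤ LinearMap.ker (x ^ (t + 1)) := by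
    intro t v hv
    rw [LinearMap.mem_ker] at hv ⊢
    rw [pow_succ', Module.End.mul_apply, hv, map_zero]
  have hmapk : ∀ t : ℕ, (LinearMap.ker (x ^ (t + 1))).map (x : V →ₗ[ℂ] V)
      ≤ LinearMap.ker (x ^ t) := by
    intro t
    rw [Submodule.map_le_iff_le_comap]
    intro v hv
    rw [LinearMap.mem_ker] at hv
    rw [Submodule.mem_comap, LinearMap.mem_ker]
    show (x ^ t) (x v) = 0
    rw [← Module.End.mul_apply, ← pow_succ]
    exact hv
  have htel : ∀ (Y : Submodule ℂ V) (m : ℕ),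
      finrank ℂ (LinearMap.ker (x ^ m) ⊓ Y : Submodule ℂ V)
        = ∑ t ∈ Finset.range m, finrank ℂ ((LinearMap.ker (x ^ (t + 1)) ⊓ Y).map
            ((x ^ t : Module.End ℂ V) : V →ₗ[ℂ] V)) := by
    intro Y m
    induction m with
    | zero =>
      simp [pow_zero, Module.End.one_eq_id, LinearMap.ker_id, bot_inf_eq]
    | succ m ih =>
      rw [Finset.sum_range_succ, ← ih]
      have h := auxGL ((x ^ m : Module.End ℂ V) : V →ₗ[ℂ] V)
        (LinearMap.ker (x ^ (m + 1)) ⊓ Y)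
      rw [← inf_assoc, inf_eq_left.mpr (hker m)] at h
      omega
  have hkerM : LinearMap.ker (x ^ M) = ⊤ := by rw [hM]; exact LinearMap.ker_zero
  revert hmono hxG hq
  induction s with
  | zero =>
    intro hmono hxG hq
    have he : Finset.Icc 1 0 = (∅ : Finset ℕ) := by decide
    simp [hG0, inf_bot_eq, Submodule.map_bot, finrank_bot, he]
  | succ s ih =>
    intro hmono hxG hq
    have ih' := ih (fun i h1 h2 => hmono i h1 (by omega))
                   (fun i h1 h2 => hxG i h1 (by omega))
                   (fun i h1 h2 => hq i h1 (by omega))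
    have hUW : G s ≤ G (s + 1) := by
      have := hmono (s + 1) (by omega) le_rfl; simpa using this
    have hxW : (G (s + 1)).map (x : V →ₗ[ℂ] V) ≤ G s := by
      have := hxG (s + 1) (by omega) le_rfl; simpa using this
    have hdim : finrank ℂ (G (s + 1)) = finrank ℂ (G s) + q (s + 1) := by
      have := hq (s + 1) (by omega) le_rfl; simpa using this
    set A : ℕ → ℕ := fun t => finrank ℂ ((LinearMap.ker (x ^ (t + 1)) ⊓ G s).map
      ((x ^ t : Module.End ℂ V) : V →ₗ[ℂ] V)) with hAdef
    set A' : ℕ → ℕ := fun t => finrank ℂ ((LinearMap.ker (x ^ (t + 1)) ⊓ G (s + 1)).map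
      ((x ^ t : Module.End ℂ V) : V →ₗ[ℂ] V)) with hA'def
    have hf2 : ∀ t, A t ≤ A' t := fun t =>
      Submodule.finrank_mono (Submodule.map_mono (inf_le_inf_left _ hUW))
    have hf3 : ∀ t, A' (t + 1) ≤ A t := by
      intro t
      have e : ((x ^ (t + 1) : Module.End ℂ V) : V →ₗ[ℂ] V)
          = ((x ^ t : Module.End ℂ V) : V →ₗ[ℂ] V) ∘ₗ (x : V →ₗ[ℂ] V) := by
        rw [pow_succ]; rfl
      show finrank ℂ ((LinearMap.ker (x ^ (t + 2)) ⊓ G (s + 1)).map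
        ((x ^ (t + 1) : Module.End ℂ V) : V →ₗ[ℂ] V)) ≤ A t
      rw [e, Submodule.map_comp]
      refine Submodule.finrank_mono (Submodule.map_mono (le_inf ?_ ?_))
      · exact le_trans (Submodule.map_mono inf_le_left) (hmapk (t + 1))
      · exact le_trans (Submodule.map_mono inf_le_right) hxW
    have hT : ∑ t ∈ Finset.range M, A t = finrank ℂ (G s) := by
      have := htel (G s) M
      rw [hkerM, top_inf_eq] at this
      exact this.symm
    have hT' : ∑ t ∈ Finset.range M, A' t = finrank ℂ (G (s + 1)) := by
      have := htel (G (s + 1)) M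
      rw [hkerM, top_inf_eq] at this
      exact this.symm
    have hB : ∑ t ∈ Finset.range M, min (A' t) k
        ≤ (∑ t ∈ Finset.range M, min (A t) k) + q (s + 1) := by
      have h1 : (∑ t ∈ Finset.range M, (A' t - A t)) + ∑ t ∈ Finset.range M, A t
          = ∑ t ∈ Finset.range M, A' t := by
        rw [← Finset.sum_add_distrib]
        exact Finset.sum_congr rfl fun t _ => by have := hf2 t; omega
      have h2 : ∑ t ∈ Finset.range M, (A' t - A t) = q (s + 1) := by omega
      calc ∑ t ∈ Finset.range M, min (A' t) k
          ≤ ∑ t ∈ Finset.range M, (min (A t) k + (A' t - A t)) :=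
            Finset.sum_le_sum fun t _ => by have := hf2 t; omega
        _ = (∑ t ∈ Finset.range M, min (A t) k) + ∑ t ∈ Finset.range M, (A' t - A t) :=
            Finset.sum_add_distrib
        _ = (∑ t ∈ Finset.range M, min (A t) k) + q (s + 1) := by rw [h2]
    have hAk : ∀ m, ∑ t ∈ Finset.range m, min (A' t) k
        ≤ (∑ t ∈ Finset.range m, min (A t) k) + k := by
      intro m
      cases m with
      | zero => simp
      | succ m =>
        rw [Finset.sum_range_succ']
        have b1 : min (A' 0) k ≤ k := min_le_right _ _
        have b2 : ∑ t ∈ Finset.range m, min (A' (t + 1)) k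
            ≤ ∑ t ∈ Finset.range m, min (A t) k :=
          Finset.sum_le_sum fun t _ => min_le_min (hf3 t) le_rfl
        have b3 : ∑ t ∈ Finset.range m, min (A t) k
            ≤ ∑ t ∈ Finset.range (m + 1), min (A t) k :=
          Finset.sum_le_sum_of_subset (Finset.range_subset_range.mpr (by omega))
        omega
    rw [Finset.sum_Icc_succ_top (by omega : 1 ≤ s + 1)]
    rcases le_total (q (s + 1)) k with h | h
    · rw [min_eq_left h]
      exact le_trans hB (Nat.add_le_add_right ih' _)
    · rw [min_eq_right h]
      exact le_trans (hAk M) (Nat.add_le_add_right ih' _)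

/-- Lemma 4.1. Given a flag `F` of type `(p_1,…,p_s)` with `x F_i ⊆ F_{i−1}` and an
index `2 ≤ j ≤ s` with `p_{j−1} ≠ p_j`, replace `F_{j−1}` by
`F'_{j−1} := φ^{−1}(ker x̄)` (if `p_{j−1} < p_j`) or `φ^{−1}(im x̄)` (if `p_{j−1} > p_j`),
where `x̄ ∈ End(F_j/F_{j−2})` is induced by `x` and `φ : F_j → F_j/F_{j−2}` is the
projection; concretely `φ^{−1}(ker x̄) = F_j ⊓ x^{−1}(F_{j−2})` and
`φ^{−1}(im x̄) = F_{j−2} ⊔ x(F_j)` as subspaces of `V`. Then `F'` is a flag of type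
`(p_1,…,p_{j−2},p_j,p_{j−1},p_{j+1},…,p_s)` and `x F'_i ⊆ F'_{i−1}` for all `i`. -/
theorem stmt4 {V : Type*} [AddCommGroup V] [Module ℂ V] [FiniteDimensional ℂ V]
    (n : ℕ) (hV : finrank ℂ V = n) (x : Module.End ℂ V) (hx : IsNilpotent x)
    (d : ℕ → ℕ) (hd : HasJordanType n x d)
    (s : ℕ) (p : ℕ → ℕ) (hp : ∀ i, 1 ≤ i → i ≤ s → 1 ≤ p i)
    (hord : ∀ i, 1 ≤ i → ordEntry s p i = d i)
    (F : ℕ → Submodule ℂ V) (hF : IsFlagOfType s p F)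
    (hxF : ∀ i, 1 ≤ i → i ≤ s → (F i).map (x : V →ₗ[ℂ] V) ≤ F (i - 1))
    (j : ℕ) (hj2 : 2 ≤ j) (hjs : j ≤ s) (hne : p (j - 1) ≠ p j)
    (F' : ℕ → Submodule ℂ V)
    (hF'other : ∀ i, i ≠ j - 1 → F' i = F i)
    (hF'j : F' (j - 1) =
      if p (j - 1) < p j then F j ⊓ (F (j - 2)).comap (x : V →ₗ[ℂ] V)
      else F (j - 2) ⊔ (F j).map (x : V →ₗ[ℂ] V)) :
    IsFlagOfType s
      (fun i => if i = j - 1 then p j else if i = j then p (j - 1) else p i) F' ∧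
    ∀ i, 1 ≤ i → i ≤ s → (F' i).map (x : V →ₗ[ℂ] V) ≤ F' (i - 1) := by
  obtain ⟨hF0, hFs, hFmono, hFdim⟩ := hF
  obtain ⟨⟨hdmono, hdzero, hdsum⟩, hdker⟩ := hd
  -- chain facts
  have h12 : F (j - 2) ≤ F (j - 1) := by
    have h := hFmono (j - 1) (by omega) (by omega)
    rwa [show j - 1 - 1 = j - 2 from by omega] at h
  have h23 : F (j - 1) ≤ F j := hFmono j (by omega) hjs
  have hx21 : (F (j - 1)).map (x : V →ₗ[ℂ] V) ≤ F (j - 2) := by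
    have h := hxF (j - 1) (by omega) (by omega)
    rwa [show j - 1 - 1 = j - 2 from by omega] at h
  have hx32 : (F j).map (x : V →ₗ[ℂ] V) ≤ F (j - 1) := hxF j (by omega) hjs
  have hx11 : (F (j - 2)).map (x : V →ₗ[ℂ] V) ≤ F (j - 2) := by
    rcases Nat.lt_or_ge j 3 with h3 | h3
    · simp [show j - 2 = 0 from by omega, hF0]
    · have h := hxF (j - 2) (by omega) (by omega)
      have h' := hFmono (j - 2) (by omega) (by omega)
      exact le_trans h h'
  set K := F j ⊓ (F (j - 2)).comap (x : V →ₗ[ℂ] V) with hKdef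
  set I := F (j - 2) ⊔ (F j).map (x : V →ₗ[ℂ] V) with hIdef
  have hFK : F (j - 2) ≤ K := le_inf (le_trans h12 h23) (Submodule.map_le_iff_le_comap.mp hx11)
  have hF1K : F (j - 1) ≤ K := le_inf h23 (Submodule.map_le_iff_le_comap.mp hx21)
  have hKF : K ≤ F j := inf_le_left
  have hIF1 : I ≤ F (j - 1) := sup_le h12 hx32
  have hxK : K.map (x : V →ₗ[ℂ] V) ≤ F (j - 2) := Submodule.map_le_iff_le_comap.mpr inf_le_right
  have hxI : I.map (x : V →ₗ[ℂ] V) ≤ F (j - 2) := by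
    rw [hIdef, Submodule.map_sup]
    exact sup_le hx11 (le_trans (Submodule.map_mono hx32) hx21)
  -- dimensions
  have hd2 : finrank ℂ (F (j - 1)) = finrank ℂ (F (j - 2)) + p (j - 1) := by
    have h := hFdim (j - 1) (by omega) (by omega)
    rwa [show j - 1 - 1 = j - 2 from by omega] at h
  have hd3 : finrank ℂ (F j) = finrank ℂ (F (j - 1)) + p j := hFdim j (by omega) hjs
  obtain ⟨a, ha⟩ := Nat.exists_eq_add_of_le (Submodule.finrank_mono hFK)
  obtain ⟨b, hb⟩ := Nat.exists_eq_add_of_le (Submodule.finrank_mono hKF)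
  have hKI : finrank ℂ K + finrank ℂ I = finrank ℂ (F j) + finrank ℂ (F (j - 2)) := by
    have g1 := auxGL ((F (j - 2)).mkQ ∘ₗ (x : V →ₗ[ℂ] V)) (F j)
    have g2 := auxGL (F (j - 2)).mkQ I
    rw [Submodule.map_comp, LinearMap.ker_comp, Submodule.ker_mkQ] at g1
    have e1 : Submodule.comap (x : V →ₗ[ℂ] V) (F (j - 2)) ⊓ F j = K := by
      rw [hKdef, inf_comm]
    have e2 : I.map (F (j - 2)).mkQ = ((F j).map (x : V →ₗ[ℂ] V)).map (F (j - 2)).mkQ := by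
      rw [hIdef, Submodule.map_sup, Submodule.mkQ_map_self, bot_sup_eq]
    have e3 : LinearMap.ker (F (j - 2)).mkQ ⊓ I = F (j - 2) := by
      rw [Submodule.ker_mkQ]
      exact inf_eq_left.mpr le_sup_left
    rw [e1] at g1
    rw [e2, e3] at g2
    omega
  have hIdim : finrank ℂ I = finrank ℂ (F (j - 2)) + b := by omega
  have hbp1 : b ≤ p (j - 1) := by
    have := Submodule.finrank_mono hIF1; omega
  have hbp2 : b ≤ p j := by
    have := Submodule.finrank_mono hF1K; omega
  have hab : a + b = p (j - 1) + p j := by omega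
  -- the pinch
  obtain ⟨N, hN⟩ := hx
  set M := n + N with hMdef
  have hMz : x ^ M = 0 := by rw [hMdef, pow_add, hN, mul_zero]
  set k := min (p (j - 1)) (p j) with hkdef
  set G : ℕ → Submodule ℂ V := fun i => if i = j - 1 then K else F i with hGdef
  set q : ℕ → ℕ := fun i => if i = j - 1 then a else if i = j then b else p i with hqdef
  have hGv1 : ∀ i, i ≠ j - 1 → G i = F i := by
    intro i hi
    show (if i = j - 1 then K else F i) = F i
    rw [if_neg hi]
  have hGv2 : G (j - 1) = K := by
    show (if j - 1 = j - 1 then K else F (j - 1)) = K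
    rw [if_pos rfl]
  have hqv1 : ∀ i, i ≠ j - 1 → i ≠ j → q i = p i := by
    intro i hi hi'
    show (if i = j - 1 then a else if i = j then b else p i) = p i
    rw [if_neg hi, if_neg hi']
  have hqv2 : q (j - 1) = a := by
    show (if j - 1 = j - 1 then a else if j - 1 = j then b else p (j - 1)) = a
    rw [if_pos rfl]
  have hqv3 : q j = b := by
    show (if j = j - 1 then a else if j = j then b else p j) = b
    rw [if_neg (by omega : j ≠ j - 1), if_pos rfl]
  have hG0 : G 0 = ⊥ := by rw [hGv1 0 (by omega)]; exact hF0
  have hGs : G s = ⊤ := by rw [hGv1 s (by omega)]; exact hFs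
  have hGmono : ∀ i, 1 ≤ i → i ≤ s → G (i - 1) ≤ G i := by
    intro i h1 h2
    by_cases e1 : i = j - 1
    · rw [hGv1 (i - 1) (by omega), show i - 1 = j - 2 from by omega, e1, hGv2]
      exact hFK
    · by_cases e2 : i = j
      · rw [hGv1 i e1, show i - 1 = j - 1 from by omega, hGv2, e2]
        exact hKF
      · rw [hGv1 i e1, hGv1 (i - 1) (by omega)]
        exact hFmono i h1 h2
  have hGx : ∀ i, 1 ≤ i → i ≤ s → (G i).map (x : V →ₗ[ℂ] V) ≤ G (i - 1) := by
    intro i h1 h2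
    by_cases e1 : i = j - 1
    · rw [hGv1 (i - 1) (by omega), show i - 1 = j - 2 from by omega, e1, hGv2]
      exact hxK
    · by_cases e2 : i = j
      · rw [hGv1 i e1, show i - 1 = j - 1 from by omega, hGv2, e2]
        exact le_trans hx32 hF1K
      · rw [hGv1 i e1, hGv1 (i - 1) (by omega)]
        exact hxF i h1 h2
  have hGq : ∀ i, 1 ≤ i → i ≤ s → finrank ℂ (G i) = finrank ℂ (G (i - 1)) + q i := by
    intro i h1 h2
    by_cases e1 : i = j - 1
    · rw [hGv1 (i - 1) (by omega), show i - 1 = j - 2 from by omega, e1, hGv2, hqv2]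
      exact ha
    · by_cases e2 : i = j
      · rw [hGv1 i e1, show i - 1 = j - 1 from by omega, hGv2, e2, hqv3]
        exact hb
      · rw [hGv1 i e1, hGv1 (i - 1) (by omega), hqv1 i e1 e2]
        exact hFdim i h1 h2
  have hnc := auxNC x M hMz k s G q hG0 hGmono hGx hGq
  -- identify the left side with ordEntry data
  have hkermono : ∀ t : ℕ, LinearMap.ker (x ^ t) ≤ LinearMap.ker (x ^ (t + 1)) := by
    intro t v hv
    rw [LinearMap.mem_ker] at hv ⊢
    rw [pow_succ', Module.End.mul_apply, hv, map_zero]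
  have hA : ∀ t : ℕ, finrank ℂ ((LinearMap.ker (x ^ (t + 1))).map
      ((x ^ t : Module.End ℂ V) : V →ₗ[ℂ] V)) = ordEntry n d (t + 1) := by
    intro t
    have h1 := hdker (t + 1) (by omega)
    rw [show t + 1 - 1 = t from by omega] at h1
    have h2 := auxGL ((x ^ t : Module.End ℂ V) : V →ₗ[ℂ] V) (LinearMap.ker (x ^ (t + 1)))
    rw [inf_eq_left.mpr (hkermono t)] at h2
    omega
  have hL : ∑ t ∈ Finset.range M,
      min (finrank ℂ ((LinearMap.ker (x ^ (t + 1)) ⊓ G s).map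
        ((x ^ t : Module.End ℂ V) : V →ₗ[ℂ] V))) k
      = ∑ t ∈ Finset.range M, min (ordEntry n d (t + 1)) k := by
    refine Finset.sum_congr rfl fun t _ => ?_
    rw [hGs, inf_top_eq, hA t]
  rw [hL] at hnc
  -- combinatorics : the left side dominates ∑ min (p i) k
  have hdn : ∀ l, 1 ≤ l → d l ≤ n := by
    intro l hl
    rcases Nat.eq_zero_or_pos n with h0 | h0
    · have := hdzero l (by omega)
      omega
    · have hmem : (1 : ℕ) ∈ Finset.Icc 1 n := Finset.mem_Icc.mpr ⟨le_rfl, h0⟩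
      have hd1 := Finset.single_le_sum (f := d) (fun t _ => Nat.zero_le _) hmem
      rw [hdsum] at hd1
      exact le_trans (hdmono 1 l le_rfl hl) hd1
  have hC1 : ∑ i ∈ Finset.Icc 1 s, min (p i) k
      ≤ ∑ t ∈ Finset.range M, min (ordEntry n d (t + 1)) k := by
    have hP : ∑ i ∈ Finset.Icc 1 s, min (p i) k = ∑ t ∈ Finset.Icc 1 k, d t := by
      rw [← auxDC p s k]
      refine Finset.sum_congr rfl fun t ht => ?_
      exact hord t (Finset.mem_Icc.mp ht).1
    have hL0k : min n k ≤ k := min_le_right _ _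
    have hL0n : min n k ≤ n := min_le_left _ _
    have hstep : ∀ t : ℕ, ((Finset.Icc 1 (min n k)).filter fun l => (t + 1) ≤ d l).card
        ≤ min (ordEntry n d (t + 1)) k := by
      intro t
      refine le_min ?_ ?_
      · exact Finset.card_le_card
          (Finset.filter_subset_filter _ (Finset.Icc_subset_Icc_right hL0n))
      · calc ((Finset.Icc 1 (min n k)).filter fun l => (t + 1) ≤ d l).card
            ≤ (Finset.Icc 1 (min n k)).card := Finset.card_filter_le _ _
          _ ≤ k := by rw [Nat.card_Icc]; omega
    have e1 : ∑ t ∈ Finset.Icc 1 k, d t = ∑ l ∈ Finset.Icc 1 (min n k), d l := by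
      refine (Finset.sum_subset (Finset.Icc_subset_Icc_right hL0k) ?_).symm
      intro t ht hnt
      have h1 := Finset.mem_Icc.mp ht
      have h2 : ¬(1 ≤ t ∧ t ≤ min n k) := by simpa [Finset.mem_Icc] using hnt
      exact hdzero t (by omega)
    have e2 : ∑ l ∈ Finset.Icc 1 (min n k), d l
        = ∑ l ∈ Finset.Icc 1 (min n k), min (d l) M := by
      refine Finset.sum_congr rfl fun l hl => ?_
      have h1 := (Finset.mem_Icc.mp hl).1
      have := hdn l h1
      omega
    calc ∑ i ∈ Finset.Icc 1 s, min (p i) k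
        = ∑ t ∈ Finset.Icc 1 k, d t := hP
      _ = ∑ l ∈ Finset.Icc 1 (min n k), min (d l) M := by rw [e1, e2]
      _ = ∑ t ∈ Finset.Icc 1 M, ((Finset.Icc 1 (min n k)).filter fun l => t ≤ d l).card :=
          (auxDC d (min n k) M).symm
      _ = ∑ t ∈ Finset.range M, ((Finset.Icc 1 (min n k)).filter fun l => (t + 1) ≤ d l).card :=
          auxReindex _ M
      _ ≤ ∑ t ∈ Finset.range M, min (ordEntry n d (t + 1)) k :=
          Finset.sum_le_sum fun t _ => hstep t
  have hmain : ∑ i ∈ Finset.Icc 1 s, min (p i) k ≤ ∑ i ∈ Finset.Icc 1 s, min (q i) k :=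
    le_trans hC1 hnc
  -- split the sums at j-1 and j
  have hmem1 : j - 1 ∈ Finset.Icc 1 s := Finset.mem_Icc.mpr ⟨by omega, by omega⟩
  have hmem2 : j ∈ (Finset.Icc 1 s).erase (j - 1) :=
    Finset.mem_erase.mpr ⟨by omega, Finset.mem_Icc.mpr ⟨by omega, hjs⟩⟩
  have hsplit : ∀ r : ℕ → ℕ, ∑ i ∈ Finset.Icc 1 s, r i
      = r (j - 1) + (r j + ∑ i ∈ ((Finset.Icc 1 s).erase (j - 1)).erase j, r i) := by
    intro r
    rw [← Finset.add_sum_erase _ r hmem1, ← Finset.add_sum_erase _ r hmem2]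
  have hq0 : ∀ i ∈ ((Finset.Icc 1 s).erase (j - 1)).erase j, q i = p i := by
    intro i hi
    have h1 := Finset.mem_erase.mp hi
    have h2 := Finset.mem_erase.mp h1.2
    exact hqv1 i h2.1 h1.1
  have hbk : min (p (j - 1)) (p j) ≤ b := by
    have e1 := hsplit (fun i => min (p i) k)
    have e2 := hsplit (fun i => min (q i) k)
    have e3 : ∑ i ∈ ((Finset.Icc 1 s).erase (j - 1)).erase j, min (q i) k
        = ∑ i ∈ ((Finset.Icc 1 s).erase (j - 1)).erase j, min (p i) k :=
      Finset.sum_congr rfl fun i hi => by rw [hq0 i hi]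
    simp only [hqv2, hqv3] at e2
    rw [e1, e2, e3] at hmain
    omega
  -- final values of a and b
  have hbval : b = min (p (j - 1)) (p j) := by omega
  have haval : a = max (p (j - 1)) (p j) := by omega
  -- dimension of the new middle space
  have hfinal1 : finrank ℂ (F' (j - 1)) = finrank ℂ (F (j - 2)) + p j := by
    rw [hF'j]
    by_cases hlt : p (j - 1) < p j
    · rw [if_pos hlt]
      omega
    · rw [if_neg hlt]
      have hgt : p j < p (j - 1) := by omega
      omega
  have hfinal2 : finrank ℂ (F j) = finrank ℂ (F' (j - 1)) + p (j - 1) := by omega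
  have hchain1 : F (j - 2) ≤ F' (j - 1) := by
    rw [hF'j]
    split_ifs
    · exact hFK
    · exact le_sup_left
  have hchain2 : F' (j - 1) ≤ F j := by
    rw [hF'j]
    split_ifs
    · exact hKF
    · exact le_trans hIF1 h23
  have hxF'1 : (F' (j - 1)).map (x : V →ₗ[ℂ] V) ≤ F (j - 2) := by
    rw [hF'j]
    split_ifs
    · exact hxK
    · exact hxI
  have hxF'2 : (F j).map (x : V →ₗ[ℂ] V) ≤ F' (j - 1) := by
    rw [hF'j]
    split_ifs
    · exact le_trans hx32 hF1K
    · exact le_sup_right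
  refine ⟨⟨?_, ?_, ?_, ?_⟩, ?_⟩
  · rw [hF'other 0 (by omega), hF0]
  · rw [hF'other s (by omega), hFs]
  · intro i h1 h2
    by_cases e1 : i = j - 1
    · rw [hF'other (i - 1) (by omega), show i - 1 = j - 2 from by omega, e1]
      exact hchain1
    · by_cases e2 : i = j
      · rw [hF'other i (by omega), show i - 1 = j - 1 from by omega, e2]
        exact hchain2
      · rw [hF'other i e1, hF'other (i - 1) (by omega)]
        exact hFmono i h1 h2
  · intro i h1 h2
    show finrank ℂ (F' i) = finrank ℂ (F' (i - 1))
      + (if i = j - 1 then p j else if i = j then p (j - 1) else p i)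
    by_cases e1 : i = j - 1
    · rw [if_pos e1, hF'other (i - 1) (by omega), show i - 1 = j - 2 from by omega, e1]
      exact hfinal1
    · by_cases e2 : i = j
      · rw [if_neg e1, if_pos e2, hF'other i (by omega),
          show i - 1 = j - 1 from by omega, e2]
        exact hfinal2
      · rw [if_neg e1, if_neg e2, hF'other i e1, hF'other (i - 1) (by omega)]
        exact hFdim i h1 h2
  · intro i h1 h2
    by_cases e1 : i = j - 1
    · rw [hF'other (i - 1) (by omega), show i - 1 = j - 2 from by omega, e1]
      exact hxF'1
    · by_cases e2 : i = j
      · rw [hF'other i (by omega), show i - 1 = j - 1 from by omega, e2]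
        exact hxF'2
      · rw [hF'other i e1, hF'other (i - 1) (by omega)]
        exact hxF i h1 h2
end

section
/- Let ε ∈ {0,1}, let V be an n-dimensional complex vector space with a nondegenerate bilinear form ⟨,⟩ satisfying ⟨v,w⟩ = (−1)^ε⟨w,v⟩, and let x be a skew-adjoint nilpotent endomorphism of V with Jordan type d. Let q ≥ 0 and let (p_1,…,p_k, q, p_k,…,p_1) be a sequence with π := ord(p_1,…,p_k,q,p_k,…,p_1) ∈ Pai(n,q) and S(π) = d. Let F be an isotropic flag of V of type (p_1,…,p_k,q,p_k,…,p_1) with x F_i ⊆ F_{i−1} for all i. Suppose 2 ≤ j ≤ k and p_{j−1} ≠ p_j. Let x̄ be the endomorphism of F_j/F_{j−2} induced by x and φ : F_j → F_j/F_{j−2} the projection; define F'_{j−1} := φ^{−1}(ker x̄) if p_{j−1} < p_j and F'_{j−1} := φ^{−1}(im x̄) if p_{j−1} > p_j, set F'_{2k+2−j} := (F'_{j−1})^⊥, and F'_i := F_i for i ∉ {j−1, 2k+2−j}. Then F' is an isotropic flag of type (p_1,…,p_{j−2},p_j,p_{j−1},…,p_k,q,p_k,…,p_{j−1},p_j,…,p_1)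 (the entries p_{j−1} and p_j being swapped in both halves) and x F'_i ⊆ F'_{i−1} for all i. (Lemma 4.2(i).) -/
open Module

/-- `π ∈ Pai(n,q)`: a partition of `n` with `π_i` odd for `1 ≤ i ≤ q` and `π_i` even
for `i > q`. -/
def MemPai (n q : ℕ) (π : ℕ → ℕ) : Prop :=
  IsPartitionFun n π ∧ (∀ i, 1 ≤ i → i ≤ q → π i % 2 = 1) ∧ ∀ i, q < i → π i % 2 = 0

/-- `d ∈ P_ε(n)`: a partition of `n` in which every part `≡ ε (mod 2)` occurs with
even multiplicity. -/
def MemPeps (ε n : ℕ) (d : ℕ → ℕ) : Prop :=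
  IsPartitionFun n d ∧ ∀ m, 1 ≤ m → m % 2 = ε % 2 →
    ((Finset.Icc 1 n).filter fun j => d j = m).card % 2 = 0

/-- `j ∈ I(π)` (with respect to `ε` and `n`): `j ≥ 1`, `j ≢ n (mod 2)`,
`π_j ≡ ε (mod 2)` and `π_j ≥ π_{j+1} + 2`. -/
def memI (ε n : ℕ) (π : ℕ → ℕ) (j : ℕ) : Prop :=
  1 ≤ j ∧ j % 2 ≠ n % 2 ∧ π j % 2 = ε % 2 ∧ π (j + 1) + 2 ≤ π j

instance (ε n : ℕ) (π : ℕ → ℕ) (j : ℕ) : Decidable (memI ε n π j) := by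
  unfold memI; infer_instance

/-- The Spaltenstein map: `S(π)_j = π_j − 1` if `j ∈ I(π)`, `π_j + 1` if
`j − 1 ∈ I(π)`, and `π_j` otherwise. -/
def spalt (ε n : ℕ) (π : ℕ → ℕ) (j : ℕ) : ℕ :=
  if memI ε n π j then π j - 1
  else if memI ε n π (j - 1) then π j + 1
  else π j
/-- `x` is skew-adjoint with respect to the bilinear form `B`:
`⟨xv,w⟩ = −⟨v,xw⟩` for all `v, w`. -/
def IsSkewAdjointWrt {V : Type*} [AddCommGroup V] [Module ℂ V]
    (B : LinearMap.BilinForm ℂ V) (x : Module.End ℂ V) : Prop :=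
  ∀ v w, B (x v) w = - B v (x w)

/-- A flag `F` of length `s` is isotropic with respect to `B` if `F_i^⊥ = F_{s−i}`
for all `i`. -/
def IsIsotropicFlag {V : Type*} [AddCommGroup V] [Module ℂ V]
    (B : LinearMap.BilinForm ℂ V) (s : ℕ) (F : ℕ → Submodule ℂ V) : Prop :=
  ∀ i, i ≤ s → B.orthogonal (F i) = F (s - i)
/-! ### Auxiliary lemmas -/

section Aux

variable {V : Type*} [AddCommGroup V] [Module ℂ V] [FiniteDimensional ℂ V]

lemma aux_finrank_map_add_inf_ker (f : V →ₗ[ℂ] V) (A : Submodule ℂ V) :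
    finrank ℂ (A.map f) + finrank ℂ (A ⊓ LinearMap.ker f : Submodule ℂ V) = finrank ℂ A := by
  have h := LinearMap.finrank_range_add_finrank_ker (f.domRestrict A)
  rw [LinearMap.range_domRestrict, LinearMap.ker_domRestrict] at h
  have e : Submodule.comap A.subtype (LinearMap.ker f)
      = Submodule.comap A.subtype (A ⊓ LinearMap.ker f) := by
    ext v; simp [v.2]
  rw [e, (Submodule.comapSubtypeEquivOfLe
    (inf_le_left : A ⊓ LinearMap.ker f ≤ A)).finrank_eq] at h
  exact h

lemma aux_rank_rel (f : V →ₗ[ℂ] V) {A B : Submodule ℂ V} (hBA : B ≤ A) :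
    finrank ℂ (A.map f) + finrank ℂ B ≤ finrank ℂ (B.map f) + finrank ℂ A := by
  have h1 := aux_finrank_map_add_inf_ker f A
  have h2 := aux_finrank_map_add_inf_ker f B
  have h3 : finrank ℂ (B ⊓ LinearMap.ker f : Submodule ℂ V)
      ≤ finrank ℂ (A ⊓ LinearMap.ker f : Submodule ℂ V) :=
    Submodule.finrank_mono (inf_le_inf_right _ hBA)
  omega

lemma aux_chainBound (x : Module.End ℂ V) (s : ℕ) (G : ℕ → Submodule ℂ V) (hGs : G s = ⊤)
    (qq : ℕ → ℕ) (hq : ∀ i, 1 ≤ i → i ≤ s → finrank ℂ (G i) = finrank ℂ (G (i - 1)) + qq i)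
    (hch : ∀ i, 1 ≤ i → i ≤ s → G (i - 1) ≤ G i)
    (hxG : ∀ i, 1 ≤ i → i ≤ s → (G i).map (x : V →ₗ[ℂ] V) ≤ G (i - 1))
    (T : Finset ℕ) (hT : T ⊆ Finset.Icc 1 s) :
    ∑ t ∈ T, qq t ≤ finrank ℂ (LinearMap.ker ((x : V →ₗ[ℂ] V) ^ T.card)) := by
  have key : ∀ t, t ≤ s →
      finrank ℂ ((G t).map ((x : V →ₗ[ℂ] V) ^ (T ∩ Finset.Icc 1 t).card))
        + ∑ u ∈ T ∩ Finset.Icc 1 t, qq u ≤ finrank ℂ (G t) := by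
    intro t
    induction t with
    | zero =>
      intro _
      have h0 : T ∩ Finset.Icc 1 0 = ∅ := by simp
      rw [h0]
      simp only [Finset.card_empty, Finset.sum_empty, add_zero]
      exact Submodule.finrank_map_le _ _
    | succ t ih =>
      intro hts
      have ht' : t ≤ s := by omega
      have hicc : Finset.Icc 1 (t + 1) = insert (t + 1) (Finset.Icc 1 t) := by
        ext u; simp; omega
      have h3 : finrank ℂ (G (t+1)) = finrank ℂ (G t) + qq (t+1) := by
        have := hq (t+1) (by omega) hts; simpa using this
      by_cases hmem : t + 1 ∈ T
      · have hnm : t + 1 ∉ T ∩ Finset.Icc 1 t := by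
          rw [Finset.mem_inter]; rintro ⟨-, h2⟩
          rw [Finset.mem_Icc] at h2; omega
        rw [hicc, Finset.inter_insert_of_mem hmem, Finset.card_insert_of_notMem hnm,
          Finset.sum_insert hnm]
        have hmap : (G (t+1)).map ((x : V →ₗ[ℂ] V) ^ ((T ∩ Finset.Icc 1 t).card + 1))
            ≤ (G t).map ((x : V →ₗ[ℂ] V) ^ (T ∩ Finset.Icc 1 t).card) := by
          rw [pow_succ, Module.End.mul_eq_comp, Submodule.map_comp]
          exact Submodule.map_mono (by simpa using hxG (t+1) (by omega) hts)
        have h1 := Submodule.finrank_mono hmap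
        have h2 := ih ht'
        omega
      · rw [hicc, Finset.inter_insert_of_notMem hmem]
        have h2 := ih ht'
        have hle : G t ≤ G (t + 1) := by
          have := hch (t+1) (by omega) hts; simpa using this
        have h4 := aux_rank_rel ((x : V →ₗ[ℂ] V) ^ (T ∩ Finset.Icc 1 t).card) hle
        omega
  have hTcap : T ∩ Finset.Icc 1 s = T := by
    rw [Finset.inter_eq_left]; exact hT
  have hk := key s (le_refl s)
  rw [hTcap, hGs] at hk
  have hrange : (⊤ : Submodule ℂ V).map ((x : V →ₗ[ℂ] V) ^ T.card)
      = LinearMap.range ((x : V →ₗ[ℂ] V) ^ T.card) := by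
    rw [LinearMap.range_eq_map]
  rw [hrange] at hk
  have hrk := LinearMap.finrank_range_add_finrank_ker ((x : V →ₗ[ℂ] V) ^ T.card)
  have htop : finrank ℂ (⊤ : Submodule ℂ V) = finrank ℂ V := finrank_top ℂ V
  omega

lemma aux_sum_card_filter (S : Finset ℕ) (f : ℕ → ℕ) (N : ℕ) :
    ∑ v ∈ Finset.Icc 1 N, ((S.filter fun t => v ≤ f t).card) = ∑ t ∈ S, min (f t) N := by
  have h1 : ∀ v, ((S.filter fun t => v ≤ f t).card) = ∑ t ∈ S, if v ≤ f t then 1 else 0 :=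
    fun v => Finset.card_filter _ _
  rw [Finset.sum_congr rfl (fun v _ => h1 v), Finset.sum_comm]
  refine Finset.sum_congr rfl fun t _ => ?_
  have h2 : (Finset.Icc 1 N).filter (fun v => v ≤ f t) = Finset.Icc 1 (min (f t) N) := by
    ext v; simp [Finset.mem_Icc, Finset.mem_filter]; omega
  calc (∑ v ∈ Finset.Icc 1 N, if v ≤ f t then 1 else 0)
      = ((Finset.Icc 1 N).filter (fun v => v ≤ f t)).card := (Finset.card_filter _ _).symm
    _ = min (f t) N := by rw [h2, Nat.card_Icc]; omega

lemma aux_ordEntry_mono (s : ℕ) (p : ℕ → ℕ) {u v : ℕ} (h : u ≤ v) :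
    ordEntry s p v ≤ ordEntry s p u := by
  apply Finset.card_le_card
  intro t ht
  simp only [Finset.mem_filter] at ht ⊢
  exact ⟨ht.1, le_trans h ht.2⟩

lemma aux_spalt_min_le (ε n : ℕ) (π : ℕ → ℕ) (d : ℕ → ℕ)
    (hmono : ∀ u v : ℕ, u ≤ v → π v ≤ π u)
    (hS : ∀ i, 1 ≤ i → spalt ε n π i = d i) (w : ℕ) :
    ∑ u ∈ Finset.Icc 1 n, min (d u) (π w) ≤ ∑ u ∈ Finset.Icc 1 n, min (π u) (π w) := by
  have keyterm : ∀ u ∈ Finset.Icc 1 n,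
      min (d u) (π w) + (if memI ε n π u ∧ π u ≤ π w then 1 else 0)
        = min (π u) (π w) + (if memI ε n π (u - 1) ∧ π u < π w then 1 else 0) := by
    intro u hu
    rw [Finset.mem_Icc] at hu
    have hdu : d u = spalt ε n π u := (hS u hu.1).symm
    by_cases h1 : memI ε n π u
    · by_cases h2 : memI ε n π (u - 1)
      · exfalso; have a1 := h1.2.1; have a2 := h2.2.1; have a3 := h2.1; omega
      · have e1 : d u = π u - 1 := by rw [hdu, spalt, if_pos h1]
        have hb : π (u + 1) + 2 ≤ π u := h1.2.2.2
        simp only [e1, h1, h2, true_and, false_and, if_false]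
        split_ifs <;> omega
    · by_cases h2 : memI ε n π (u - 1)
      · have e1 : d u = π u + 1 := by rw [hdu, spalt, if_neg h1, if_pos h2]
        simp only [e1, h1, h2, true_and, false_and, if_false]
        split_ifs <;> omega
      · have e1 : d u = π u := by rw [hdu, spalt, if_neg h1, if_neg h2]
        simp only [e1, h1, h2, false_and, if_false]
  have hsum : (∑ u ∈ Finset.Icc 1 n, min (d u) (π w))
        + (∑ u ∈ Finset.Icc 1 n, if memI ε n π u ∧ π u ≤ π w then 1 else 0)
      = (∑ u ∈ Finset.Icc 1 n, min (π u) (π w))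
        + (∑ u ∈ Finset.Icc 1 n, if memI ε n π (u - 1) ∧ π u < π w then 1 else 0) := by
    rw [← Finset.sum_add_distrib, ← Finset.sum_add_distrib]
    exact Finset.sum_congr rfl keyterm
  have hcard : (∑ u ∈ Finset.Icc 1 n, if memI ε n π (u - 1) ∧ π u < π w then 1 else 0)
      ≤ (∑ u ∈ Finset.Icc 1 n, if memI ε n π u ∧ π u ≤ π w then 1 else 0) := by
    rw [← Finset.card_filter, ← Finset.card_filter]
    apply Finset.card_le_card_of_injOn (fun u => u - 1)
    · intro u hu
      simp only [Finset.mem_coe, Finset.mem_filter, Finset.mem_Icc] at hu ⊢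
      obtain ⟨⟨hu1, hun⟩, hmI, hlt⟩ := hu
      have hu2 : 1 ≤ u - 1 := hmI.1
      have hwu : w < u := by
        by_contra hc
        exact absurd (hmono u w (by omega)) (by omega)
      have hle : π (u - 1) ≤ π w := hmono w (u - 1) (by omega)
      exact ⟨⟨by omega, by omega⟩, hmI, by omega⟩
    · intro u hu u' hu' he
      simp only [Finset.coe_filter, Set.mem_setOf_eq, Finset.mem_Icc] at hu hu'
      have := hu.2.1.1; have := hu'.2.1.1
      simp only at he; omega
  omega

lemma aux_sum_min_pi (s : ℕ) (p : ℕ → ℕ) (n : ℕ) (b' : ℕ)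
    (hpn : ∀ t ∈ Finset.Icc 1 s, p t ≤ n) :
    ∑ u ∈ Finset.Icc 1 n, min (ordEntry s p u) (ordEntry s p b')
      = ∑ t ∈ (Finset.Icc 1 s).filter (fun t => b' ≤ p t), p t := by
  have ha : ∀ u, min (ordEntry s p u) (ordEntry s p b')
      = ((((Finset.Icc 1 s).filter (fun t => b' ≤ p t)).filter fun t => u ≤ p t)).card := by
    intro u
    by_cases hub : u ≤ b'
    · have h1 : ordEntry s p b' ≤ ordEntry s p u := aux_ordEntry_mono s p hub
      have h2 : (((Finset.Icc 1 s).filter (fun t => b' ≤ p t)).filter fun t => u ≤ p t)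
          = (Finset.Icc 1 s).filter (fun t => b' ≤ p t) := by
        apply Finset.filter_eq_self.mpr
        intro t ht
        rw [Finset.mem_filter] at ht
        omega
      rw [h2, min_eq_right h1]; rfl
    · have h1 : ordEntry s p u ≤ ordEntry s p b' := aux_ordEntry_mono s p (by omega)
      have h2 : (((Finset.Icc 1 s).filter (fun t => b' ≤ p t)).filter fun t => u ≤ p t)
          = (Finset.Icc 1 s).filter (fun t => u ≤ p t) := by
        rw [Finset.filter_filter]
        apply Finset.filter_congr
        intro t _
        exact ⟨fun h => h.2, fun h => ⟨by omega, h⟩⟩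
      rw [h2, min_eq_left h1]; rfl
  rw [Finset.sum_congr rfl (fun u _ => ha u), aux_sum_card_filter]
  refine Finset.sum_congr rfl fun t ht => ?_
  rw [Finset.mem_filter] at ht
  have := hpn t ht.1
  omega

end Aux

/-- Lemma 4.2(i). Given an isotropic flag `F` of type `(p_1,…,p_k,q,p_k,…,p_1)`
(of length `s = 2k+1`) with `x F_i ⊆ F_{i−1}`, and `2 ≤ j ≤ k` with `p_{j−1} ≠ p_j`,
replace `F_{j−1}` by `F'_{j−1} := φ^{−1}(ker x̄)` (if `p_{j−1} < p_j`) or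
`φ^{−1}(im x̄)` (if `p_{j−1} > p_j`) — concretely `F_j ⊓ x^{−1}(F_{j−2})`, resp.
`F_{j−2} ⊔ x(F_j)` — and `F_{2k+2−j}` by `(F'_{j−1})^⊥`. Then `F'` is an isotropic
flag of the type obtained by swapping `p_{j−1}` and `p_j` in both halves, and
`x F'_i ⊆ F'_{i−1}` for all `i`. -/
theorem stmt5 {V : Type*} [AddCommGroup V] [Module ℂ V] [FiniteDimensional ℂ V]
    (n : ℕ) (hV : finrank ℂ V = n)
    (ε : ℕ) (hε : ε ≤ 1)
    (B : LinearMap.BilinForm ℂ V) (hB : B.Nondegenerate)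
    (hsign : ∀ v w, B v w = (-1 : ℂ) ^ ε * B w v)
    (x : Module.End ℂ V) (hskew : IsSkewAdjointWrt B x) (hx : IsNilpotent x)
    (d : ℕ → ℕ) (hd : HasJordanType n x d)
    (q k : ℕ) (p : ℕ → ℕ)
    (hmid : p (k + 1) = q)
    (hpal : ∀ i, 1 ≤ i → i ≤ 2 * k + 1 → p (2 * k + 2 - i) = p i)
    (hppos : ∀ i, 1 ≤ i → i ≤ k → 1 ≤ p i)
    (hπ : MemPai n q (ordEntry (2 * k + 1) p))
    (hS : ∀ i, 1 ≤ i → spalt ε n (ordEntry (2 * k + 1) p) i = d i)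
    (F : ℕ → Submodule ℂ V) (hF : IsFlagOfType (2 * k + 1) p F)
    (hFiso : IsIsotropicFlag B (2 * k + 1) F)
    (hxF : ∀ i, 1 ≤ i → i ≤ 2 * k + 1 → (F i).map (x : V →ₗ[ℂ] V) ≤ F (i - 1))
    (j : ℕ) (hj2 : 2 ≤ j) (hjk : j ≤ k) (hne : p (j - 1) ≠ p j)
    (F' : ℕ → Submodule ℂ V)
    (hF'other : ∀ i, i ≠ j - 1 → i ≠ 2 * k + 2 - j → F' i = F i)
    (hF'j : F' (j - 1) =
      if p (j - 1) < p j then F j ⊓ (F (j - 2)).comap (x : V →ₗ[ℂ] V)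
      else F (j - 2) ⊔ (F j).map (x : V →ₗ[ℂ] V))
    (hF'perp : F' (2 * k + 2 - j) = B.orthogonal (F' (j - 1))) :
    IsFlagOfType (2 * k + 1)
      (fun i => if i = j - 1 then p j else if i = j then p (j - 1)
        else if i = 2 * k + 2 - j then p (2 * k + 3 - j)
        else if i = 2 * k + 3 - j then p (2 * k + 2 - j) else p i) F' ∧
    IsIsotropicFlag B (2 * k + 1) F' ∧
    ∀ i, 1 ≤ i → i ≤ 2 * k + 1 → (F' i).map (x : V →ₗ[ℂ] V) ≤ F' (i - 1) := by
  classical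
  obtain ⟨hF0, hFs, hFle, hFrk⟩ := hF
  have hk2 : 2 ≤ k := le_trans hj2 hjk
  have ej1 : j - 1 - 1 = j - 2 := by omega
  have hn_top : finrank ℂ (F (2*k+1)) = n := by rw [hFs, finrank_top, hV]
  have hrk_j : finrank ℂ (F j) = finrank ℂ (F (j-1)) + p j := hFrk j (by omega) (by omega)
  have hrk_j1 : finrank ℂ (F (j-1)) = finrank ℂ (F (j-2)) + p (j-1) := by
    have h := hFrk (j-1) (by omega) (by omega); rwa [ej1] at h
  have hle_j : F (j-1) ≤ F j := hFle j (by omega) (by omega)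
  have hle_j1 : F (j-2) ≤ F (j-1) := by
    have h := hFle (j-1) (by omega) (by omega); rwa [ej1] at h
  have hxFj : (F j).map (x : V →ₗ[ℂ] V) ≤ F (j-1) := hxF j (by omega) (by omega)
  have hxFj1 : (F (j-1)).map (x : V →ₗ[ℂ] V) ≤ F (j-2) := by
    have h := hxF (j-1) (by omega) (by omega); rwa [ej1] at h
  have hxFj2 : (F (j-2)).map (x : V →ₗ[ℂ] V) ≤ F (j-2) := by
    by_cases h2 : j = 2
    · subst h2
      norm_num
      rw [hF0]
      simp
    · exact le_trans (hxF (j-2) (by omega) (by omega)) (hFle (j-2) (by omega) (by omega))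
  set K : Submodule ℂ V := F j ⊓ (F (j-2)).comap (x : V →ₗ[ℂ] V) with hKdef
  set Sp : Submodule ℂ V := F (j-2) ⊔ (F j).map (x : V →ₗ[ℂ] V) with hSpdef
  have hFj2K : F (j-2) ≤ K :=
    le_inf (le_trans hle_j1 hle_j) (Submodule.map_le_iff_le_comap.mp hxFj2)
  have hKFj : K ≤ F j := inf_le_left
  have hxK : K.map (x : V →ₗ[ℂ] V) ≤ F (j-2) :=
    le_trans (Submodule.map_mono inf_le_right) (Submodule.map_comap_le _ _)
  have hxFjK : (F j).map (x : V →ₗ[ℂ] V) ≤ K :=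
    le_inf (le_trans hxFj hle_j)
      (Submodule.map_le_iff_le_comap.mp (le_trans (Submodule.map_mono hxFj) hxFj1))
  have hSpFj1 : Sp ≤ F (j-1) := sup_le hle_j1 hxFj
  have hxSp : Sp.map (x : V →ₗ[ℂ] V) ≤ F (j-2) := by
    rw [hSpdef, Submodule.map_sup]
    exact sup_le hxFj2 (le_trans (Submodule.map_mono hxFj) hxFj1)
  have hmapK : K.map (x : V →ₗ[ℂ] V) = (F j).map (x : V →ₗ[ℂ] V) ⊓ F (j-2) := by
    apply le_antisymm
    · exact le_inf (Submodule.map_mono inf_le_left)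
        (le_trans (Submodule.map_mono inf_le_right) (Submodule.map_comap_le _ _))
    · intro v hv
      rw [Submodule.mem_inf] at hv
      obtain ⟨hv1, hv2⟩ := hv
      obtain ⟨w, hw, rfl⟩ := Submodule.mem_map.mp hv1
      exact Submodule.mem_map_of_mem (Submodule.mem_inf.mpr ⟨hw, Submodule.mem_comap.mpr hv2⟩)
  have hkerK : (K ⊓ LinearMap.ker (x : V →ₗ[ℂ] V) : Submodule ℂ V)
      = F j ⊓ LinearMap.ker (x : V →ₗ[ℂ] V) := by
    apply le_antisymm
    · exact inf_le_inf_right _ inf_le_left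
    · intro v hv
      rw [Submodule.mem_inf] at hv ⊢
      refine ⟨Submodule.mem_inf.mpr ⟨hv.1, Submodule.mem_comap.mpr ?_⟩, hv.2⟩
      have hz : (x : V →ₗ[ℂ] V) v = 0 := LinearMap.mem_ker.mp hv.2
      rw [hz]; exact zero_mem _
  have hE : finrank ℂ K + finrank ℂ Sp = finrank ℂ (F j) + finrank ℂ (F (j-2)) := by
    have h1 := aux_finrank_map_add_inf_ker (x : V →ₗ[ℂ] V) K
    have h2 := aux_finrank_map_add_inf_ker (x : V →ₗ[ℂ] V) (F j)
    have h3 := Submodule.finrank_sup_add_finrank_inf_eq (F (j-2)) ((F j).map (x : V →ₗ[ℂ] V))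
    rw [hmapK, hkerK] at h1
    rw [← hSpdef, inf_comm] at h3
    have h4 : finrank ℂ ((F j).map (x : V →ₗ[ℂ] V) ⊓ F (j-2) : Submodule ℂ V)
        = finrank ℂ (F (j-2) ⊓ (F j).map (x : V →ₗ[ℂ] V) : Submodule ℂ V) := by
      rw [inf_comm]
    omega
  have hKge1 : finrank ℂ (F (j-1)) ≤ finrank ℂ K :=
    Submodule.finrank_mono (le_inf hle_j (Submodule.map_le_iff_le_comap.mp hxFj1))
  have hSple : finrank ℂ Sp ≤ finrank ℂ (F (j-1)) := Submodule.finrank_mono hSpFj1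
  have hπmono : ∀ u v : ℕ, u ≤ v → ordEntry (2*k+1) p v ≤ ordEntry (2*k+1) p u :=
    fun u v h => aux_ordEntry_mono _ _ h
  have hpn : ∀ t ∈ Finset.Icc 1 (2*k+1), p t ≤ n := by
    intro t ht
    rw [Finset.mem_Icc] at ht
    have h1 := hFrk t ht.1 ht.2
    have h2 : finrank ℂ (F t) ≤ finrank ℂ V := Submodule.finrank_le _
    omega
  have hkd : ∀ i : ℕ, finrank ℂ (LinearMap.ker ((x : V →ₗ[ℂ] V) ^ i))
      = ∑ v ∈ Finset.Icc 1 i, ordEntry n d v := by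
    intro i
    induction i with
    | zero =>
      rw [pow_zero]
      simp [Module.End.one_eq_id, LinearMap.ker_id]
      exact finrank_bot ℂ V
    | succ i ih =>
      have h := hd.2 (i+1) (by omega)
      rw [Nat.add_sub_cancel] at h
      rw [h, ih, Finset.sum_Icc_succ_top (by omega : 1 ≤ i + 1)]
  have hker_le : finrank ℂ (LinearMap.ker ((x : V →ₗ[ℂ] V)
        ^ (ordEntry (2*k+1) p (max (p (j-1)) (p j)))))
      ≤ ∑ t ∈ (Finset.Icc 1 (2*k+1)).filter (fun t => max (p (j-1)) (p j) ≤ p t), p t := by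
    rw [hkd]
    have e1 : ∑ v ∈ Finset.Icc 1 (ordEntry (2*k+1) p (max (p (j-1)) (p j))), ordEntry n d v
        = ∑ u ∈ Finset.Icc 1 n, min (d u) (ordEntry (2*k+1) p (max (p (j-1)) (p j))) := by
      rw [← aux_sum_card_filter (Finset.Icc 1 n) d]
      rfl
    rw [e1]
    calc ∑ u ∈ Finset.Icc 1 n, min (d u) (ordEntry (2*k+1) p (max (p (j-1)) (p j)))
        ≤ ∑ u ∈ Finset.Icc 1 n,
            min (ordEntry (2*k+1) p u) (ordEntry (2*k+1) p (max (p (j-1)) (p j))) :=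
          aux_spalt_min_le ε n _ d hπmono hS _
      _ = _ := aux_sum_min_pi (2*k+1) p n _ hpn
  have hKub : finrank ℂ K ≤ finrank ℂ (F (j-2)) + max (p (j-1)) (p j) := by
    by_contra hcon
    push_neg at hcon
    set T₀ := (Finset.Icc 1 (2*k+1)).filter (fun t => max (p (j-1)) (p j) ≤ p t) with hT₀def
    set T : Finset ℕ := insert (j-1) (T₀.erase j) with hTdef
    have hTsub : T ⊆ Finset.Icc 1 (2*k+1) := by
      intro t ht
      rw [hTdef, Finset.mem_insert] at ht
      rcases ht with rfl | ht
      · rw [Finset.mem_Icc]; omega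
      · exact Finset.filter_subset _ _ (Finset.erase_subset _ _ ht)
    have hmK1 : finrank ℂ (F (j-2)) ≤ finrank ℂ K := Submodule.finrank_mono hFj2K
    have hmK2 : finrank ℂ K ≤ finrank ℂ (F j) := Submodule.finrank_mono hKFj
    have hGs : (fun t => if t = j - 1 then K else F t) (2*k+1) = ⊤ := by
      simp only
      rw [if_neg (by omega : ¬ 2*k+1 = j-1)]
      exact hFs
    have hq' : ∀ i, 1 ≤ i → i ≤ 2*k+1 →
        finrank ℂ ((fun t => if t = j - 1 then K else F t) i)
          = finrank ℂ ((fun t => if t = j - 1 then K else F t) (i-1))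
            + (fun t => if t = j - 1 then finrank ℂ K - finrank ℂ (F (j-2))
                else if t = j then finrank ℂ (F j) - finrank ℂ K else p t) i := by
      intro i h1 h2
      simp only
      beta_reduce
      by_cases hi1 : i = j - 1
      · subst hi1
        rw [if_pos rfl, if_pos rfl, ej1, if_neg (by omega : ¬ j - 2 = j - 1)]
        omega
      · rw [if_neg hi1, if_neg hi1]
        by_cases hi2 : i = j
        · rw [if_pos hi2, if_pos (by omega : i - 1 = j - 1), hi2]
          omega
        · rw [if_neg hi2, if_neg (by omega : ¬ i - 1 = j - 1)]
          exact hFrk i h1 h2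
    have hch' : ∀ i, 1 ≤ i → i ≤ 2*k+1 →
        (fun t => if t = j - 1 then K else F t) (i-1)
          ≤ (fun t => if t = j - 1 then K else F t) i := by
      intro i h1 h2
      simp only
      by_cases hi1 : i = j - 1
      · subst hi1
        rw [if_pos rfl, ej1, if_neg (by omega : ¬ j - 2 = j - 1)]
        exact hFj2K
      · rw [if_neg hi1]
        by_cases hi2 : i = j
        · rw [if_pos (by omega : i - 1 = j - 1), hi2]
          exact hKFj
        · rw [if_neg (by omega : ¬ i - 1 = j - 1)]
          exact hFle i h1 h2
    have hxG' : ∀ i, 1 ≤ i → i ≤ 2*k+1 →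
        ((fun t => if t = j - 1 then K else F t) i).map (x : V →ₗ[ℂ] V)
          ≤ (fun t => if t = j - 1 then K else F t) (i-1) := by
      intro i h1 h2
      simp only
      by_cases hi1 : i = j - 1
      · subst hi1
        rw [if_pos rfl, ej1, if_neg (by omega : ¬ j - 2 = j - 1)]
        exact hxK
      · rw [if_neg hi1]
        by_cases hi2 : i = j
        · rw [if_pos (by omega : i - 1 = j - 1), hi2]
          exact hxFjK
        · rw [if_neg (by omega : ¬ i - 1 = j - 1)]
          exact hxF i h1 h2
    have hbound := aux_chainBound x (2*k+1) (fun t => if t = j - 1 then K else F t) hGs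
      (fun t => if t = j - 1 then finrank ℂ K - finrank ℂ (F (j-2))
        else if t = j then finrank ℂ (F j) - finrank ℂ K else p t)
      hq' hch' hxG' T hTsub
    have hT₀card : T₀.card = ordEntry (2*k+1) p (max (p (j-1)) (p j)) := rfl
    rcases lt_or_gt_of_ne hne with hlt | hgt
    · have hjmem : j ∈ T₀ := by
        rw [hT₀def, Finset.mem_filter, Finset.mem_Icc]
        omega
      have hj1nm : j - 1 ∉ T₀ := by
        rw [hT₀def, Finset.mem_filter]
        rintro ⟨-, hc⟩
        omega
      have hj1nm' : j - 1 ∉ T₀.erase j := fun h => hj1nm (Finset.erase_subset _ _ h)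
      have hc1 : T.card = T₀.card := by
        rw [hTdef, Finset.card_insert_of_notMem hj1nm', Finset.card_erase_of_mem hjmem]
        have hpos : 1 ≤ T₀.card := Finset.card_pos.mpr ⟨j, hjmem⟩
        omega
      have hqs : ∀ t ∈ T₀.erase j,
          (if t = j - 1 then finrank ℂ K - finrank ℂ (F (j-2))
            else if t = j then finrank ℂ (F j) - finrank ℂ K else p t) = p t := by
        intro t ht
        rw [Finset.mem_erase] at ht
        have ht1 : t ≠ j - 1 := fun he => hj1nm (he ▸ ht.2)
        rw [if_neg ht1, if_neg ht.1]
      have hsum1 : ∑ t ∈ T, (if t = j - 1 then finrank ℂ K - finrank ℂ (F (j-2))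
            else if t = j then finrank ℂ (F j) - finrank ℂ K else p t)
          = (finrank ℂ K - finrank ℂ (F (j-2))) + ∑ t ∈ T₀.erase j, p t := by
        rw [hTdef, Finset.sum_insert hj1nm', Finset.sum_congr rfl hqs, if_pos rfl]
      have hsum2 : ∑ t ∈ T₀.erase j, p t + p j = ∑ t ∈ T₀, p t :=
        Finset.sum_erase_add _ _ hjmem
      rw [hsum1, hc1, hT₀card] at hbound
      omega
    · have hj1mem : j - 1 ∈ T₀ := by
        rw [hT₀def, Finset.mem_filter, Finset.mem_Icc]
        omega
      have hjnm : j ∉ T₀ := by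
        rw [hT₀def, Finset.mem_filter]
        rintro ⟨-, hc⟩
        omega
      have hTT : T = T₀ := by
        rw [hTdef, Finset.erase_eq_of_notMem hjnm, Finset.insert_eq_self.mpr hj1mem]
      have hsum1 : ∑ t ∈ T₀, (if t = j - 1 then finrank ℂ K - finrank ℂ (F (j-2))
            else if t = j then finrank ℂ (F j) - finrank ℂ K else p t)
          = (finrank ℂ K - finrank ℂ (F (j-2))) + ∑ t ∈ T₀.erase (j-1), p t := by
        rw [← Finset.add_sum_erase _ _ hj1mem, if_pos rfl]
        congr 1
        apply Finset.sum_congr rfl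
        intro t ht
        rw [Finset.mem_erase] at ht
        have ht2 : t ≠ j := fun he => hjnm (he ▸ ht.2)
        rw [if_neg ht.1, if_neg ht2]
      have hsum2 : ∑ t ∈ T₀.erase (j-1), p t + p (j-1) = ∑ t ∈ T₀, p t :=
        Finset.sum_erase_add _ _ hj1mem
      rw [hTT, hsum1, hT₀card] at hbound
      omega
  have hKrk : finrank ℂ K = finrank ℂ (F (j-2)) + max (p (j-1)) (p j) := by omega
  have hSprk : finrank ℂ Sp = finrank ℂ (F (j-2)) + min (p (j-1)) (p j) := by omega
  have hJfacts : finrank ℂ (F' (j-1)) = finrank ℂ (F (j-2)) + p j ∧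
      F (j-2) ≤ F' (j-1) ∧ F' (j-1) ≤ F j ∧
      (F' (j-1)).map (x : V →ₗ[ℂ] V) ≤ F (j-2) ∧
      (F j).map (x : V →ₗ[ℂ] V) ≤ F' (j-1) := by
    rcases lt_or_gt_of_ne hne with hlt | hgt
    · have hJK : F' (j-1) = K := by rw [hF'j]; exact if_pos hlt
      rw [hJK]
      exact ⟨by omega, hFj2K, hKFj, hxK, hxFjK⟩
    · have hJS : F' (j-1) = Sp := by rw [hF'j]; exact if_neg (by omega)
      rw [hJS]
      exact ⟨by omega, le_sup_left, le_trans hSpFj1 hle_j, hxSp, le_sup_right⟩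
  obtain ⟨hJrk, hJge, hJle, hxJ, hxFjJ⟩ := hJfacts
  -- orthogonality machinery
  have hrefl : B.IsRefl := fun v w h => by rw [hsign w v, h, mul_zero]
  have hradical : (B.orthogonal ⊤ : Submodule ℂ V) = ⊥ := by
    rw [eq_bot_iff]
    intro v hv
    have h1 : ∀ u : V, B u v = 0 := fun u =>
      (LinearMap.BilinForm.mem_orthogonal_iff.mp hv) u Submodule.mem_top
    have h2 : ∀ u : V, B v u = 0 := fun u => hrefl u v (h1 u)
    exact (Submodule.mem_bot ℂ).mpr (hB.1 v h2)
  have horth_dim : ∀ W : Submodule ℂ V, finrank ℂ W + finrank ℂ (B.orthogonal W) = n := by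
    intro W
    have h := LinearMap.BilinForm.finrank_add_finrank_orthogonal hrefl W
    rw [hradical, inf_bot_eq] at h
    have hb0 : finrank ℂ (⊥ : Submodule ℂ V) = 0 := finrank_bot ℂ V
    omega
  have hdouble : ∀ W : Submodule ℂ V, B.orthogonal (B.orthogonal W) = W := by
    intro W
    refine (Submodule.eq_of_le_of_finrank_le
      (LinearMap.BilinForm.le_orthogonal_orthogonal hrefl) ?_).symm
    have h1 := horth_dim W
    have h2 := horth_dim (B.orthogonal W)
    omega
  have hFm1 : B.orthogonal (F j) = F (2*k+1-j) := by
    have h := hFiso j (by omega)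
    rwa [show 2*k+1-j = 2*k+1-j from rfl] at h
  have hFm3 : B.orthogonal (F (j-2)) = F (2*k+3-j) := by
    have h := hFiso (j-2) (by omega)
    rwa [show 2*k+1-(j-2) = 2*k+3-j by omega] at h
  have hp1 : p (2*k+3-j) = p (j-1) := by
    have h := hpal (j-1) (by omega) (by omega)
    rwa [show 2*k+2-(j-1) = 2*k+3-j by omega] at h
  have hp2 : p (2*k+2-j) = p j := hpal j (by omega) (by omega)
  have hrkJm : finrank ℂ (F' (2*k+2-j)) + finrank ℂ (F' (j-1)) = n := by
    rw [hF'perp]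
    have h := horth_dim (F' (j-1))
    omega
  have hrkFm1 : finrank ℂ (F (2*k+1-j)) + finrank ℂ (F j) = n := by
    rw [← hFm1]
    have h := horth_dim (F j)
    omega
  have hrkFm3 : finrank ℂ (F (2*k+3-j)) + finrank ℂ (F (j-2)) = n := by
    rw [← hFm3]
    have h := horth_dim (F (j-2))
    omega
  refine ⟨⟨?_, ?_, ?_, ?_⟩, ?_, ?_⟩
  · -- F' 0 = ⊥
    rw [hF'other 0 (by omega) (by omega)]
    exact hF0
  · -- F' (2k+1) = ⊤
    rw [hF'other (2*k+1) (by omega) (by omega)]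
    exact hFs
  · -- chain
    intro i h1 h2
    by_cases hi1 : i = j - 1
    · subst hi1
      rw [ej1, hF'other (j-2) (by omega) (by omega)]
      exact hJge
    · by_cases hi2 : i = j
      · rw [hi2, hF'other j (by omega) (by omega), show j - 1 = j - 1 from rfl]
        exact hJle
      · by_cases hi3 : i = 2*k+2-j
        · subst hi3
          rw [show 2*k+2-j-1 = 2*k+1-j by omega,
            hF'other (2*k+1-j) (by omega) (by omega), hF'perp, ← hFm1]
          exact LinearMap.BilinForm.orthogonal_le hJle
        · by_cases hi4 : i = 2*k+3-j
          · subst hi4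
            rw [show 2*k+3-j-1 = 2*k+2-j by omega,
              hF'other (2*k+3-j) (by omega) (by omega), hF'perp, ← hFm3]
            exact LinearMap.BilinForm.orthogonal_le hJge
          · rw [hF'other i hi1 hi3, hF'other (i-1) (by omega) (by omega)]
            exact hFle i h1 h2
  · -- dims
    intro i h1 h2
    simp only
    by_cases hi1 : i = j - 1
    · subst hi1
      rw [if_pos rfl, ej1, hF'other (j-2) (by omega) (by omega)]
      exact hJrk
    · by_cases hi2 : i = j
      · rw [if_neg hi1, if_pos hi2, hi2, hF'other j (by omega) (by omega)]
        omega
      · by_cases hi3 : i = 2*k+2-j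
        · subst hi3
          rw [if_neg hi1, if_neg hi2, if_pos rfl,
            show 2*k+2-j-1 = 2*k+1-j by omega,
            hF'other (2*k+1-j) (by omega) (by omega), hp1]
          omega
        · by_cases hi4 : i = 2*k+3-j
          · subst hi4
            rw [if_neg hi1, if_neg hi2, if_neg hi3, if_pos rfl,
              show 2*k+3-j-1 = 2*k+2-j by omega,
              hF'other (2*k+3-j) (by omega) (by omega), hp2]
            omega
          · rw [if_neg hi1, if_neg hi2, if_neg hi3, if_neg hi4,
              hF'other i hi1 hi3, hF'other (i-1) (by omega) (by omega)]
            exact hFrk i h1 h2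
  · -- isotropic
    intro i hi
    by_cases hi1 : i = j - 1
    · subst hi1
      rw [show 2*k+1-(j-1) = 2*k+2-j by omega]
      exact hF'perp.symm
    · by_cases hi3 : i = 2*k+2-j
      · subst hi3
        rw [show 2*k+1-(2*k+2-j) = j-1 by omega, hF'perp]
        exact hdouble _
      · rw [hF'other i hi1 hi3, hF'other (2*k+1-i) (by omega) (by omega)]
        exact hFiso i hi
  · -- x-stability
    intro i h1 h2
    by_cases hi1 : i = j - 1
    · subst hi1
      rw [ej1, hF'other (j-2) (by omega) (by omega)]
      exact hxJ
    · by_cases hi2 : i = j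
      · rw [hi2, hF'other j (by omega) (by omega)]
        exact hxFjJ
      · by_cases hi3 : i = 2*k+2-j
        · subst hi3
          rw [show 2*k+2-j-1 = 2*k+1-j by omega,
            hF'other (2*k+1-j) (by omega) (by omega), hF'perp, ← hFm1]
          rintro v hv
          rw [Submodule.mem_map] at hv
          obtain ⟨w, hw, rfl⟩ := hv
          rw [LinearMap.BilinForm.mem_orthogonal_iff]
          intro u hu
          have hxu : (x : V →ₗ[ℂ] V) u ∈ F' (j-1) :=
            hxFjJ (Submodule.mem_map_of_mem hu)
          have h0 : B ((x : V →ₗ[ℂ] V) u) w = 0 :=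
            (LinearMap.BilinForm.mem_orthogonal_iff.mp hw) _ hxu
          have h1' : B w ((x : V →ₗ[ℂ] V) u) = 0 := hrefl _ _ h0
          show B u ((x : V →ₗ[ℂ] V) w) = 0
          rw [hsign u ((x : V →ₗ[ℂ] V) w), hskew w u, h1']
          ring
        · by_cases hi4 : i = 2*k+3-j
          · subst hi4
            rw [show 2*k+3-j-1 = 2*k+2-j by omega,
              hF'other (2*k+3-j) (by omega) (by omega), hF'perp, ← hFm3]
            rintro v hv
            rw [Submodule.mem_map] at hv
            obtain ⟨w, hw, rfl⟩ := hv
            rw [LinearMap.BilinForm.mem_orthogonal_iff]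
            intro u hu
            have hxu : (x : V →ₗ[ℂ] V) u ∈ F (j-2) :=
              hxJ (Submodule.mem_map_of_mem hu)
            have h0 : B ((x : V →ₗ[ℂ] V) u) w = 0 :=
              (LinearMap.BilinForm.mem_orthogonal_iff.mp hw) _ hxu
            have h1' : B w ((x : V →ₗ[ℂ] V) u) = 0 := hrefl _ _ h0
            show B u ((x : V →ₗ[ℂ] V) w) = 0
            rw [hsign u ((x : V →ₗ[ℂ] V) w), hskew w u, h1']
            ring
          · rw [hF'other i hi1 hi3, hF'other (i-1) (by omega) (by omega)]
            exact hxF i h1 h2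
end
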